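/- arXiv:1103.4687 — 5 statements merged into one kernel-verified Lean document; each statement's English description precedes it below -/
import Mathlib

section
/- Let X and Y be independent nonnegative real random variables with common cumulative distribution function F, where F is continuous, F(0) = 0, and F has a density f with support [0,∞). Let 0 ≤ c < τ₁ ≤ τ₂. Then E[ log(1 + max( X·1{X ≥ τ₁}, Y·1{Y ≥ τ₂}, c )) ] = ∫_{τ₂}^{∞} log(1+x)·2F(x)f(x) dx + F(τ₂)·∫_{τ₁}^{τ₂} log(1+x)·f(x) dx + log(1+c)·F(τ₁)·F(τ₂). -/
/-!
Once `max(X, Y) ≥ τ₂` the truncated maximum is `max(X, Y)`; otherwise it is `X` when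
`τ₁ ≤ X < τ₂` and `c` when `X < τ₁`. This splits the integrand exactly into a function of
`max(X, Y)` plus two products of a function of `X` with a function of `Y`. The common law `ν`
has density `f`, hence no atoms, so by Fubini and the symmetry of `ν ⊗ ν`,
`E φ(max(X, Y)) = 2 ∫ φ(x) F(x) dν(x)`; independence factorises the two other terms.
-/

open MeasureTheory ProbabilityTheory Set Filter

section Density

variable {ν : Measure ℝ} [IsProbabilityMeasure ν] {f : ℝ → ℝ}

theorem integrable_of_measureReal_Iic_eq_integral (hf : 0 ≤ f)
    (hcdf : ∀ x, ν.real (Iic x) = ∫ t in Iic x, f t) : Integrable f := by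
  obtain ⟨n, hn⟩ : ∃ n, 0 < ν.real (Iic n) := by
    have hlim := (tendsto_measure_Iic_atTop ν).eventually_const_lt
      (by rw [measure_univ]; exact zero_lt_one)
    obtain ⟨n, hn⟩ := hlim.exists
    exact ⟨n, ENNReal.toReal_pos hn.ne' (measure_ne_top _ _)⟩
  have hIic : ∀ x, IntegrableOn f (Iic x) := fun x => by
    have : IntegrableOn f (Iic (max x n)) := by
      by_contra h
      have := (hcdf (max x n)).trans (integral_undef h)
      have := measureReal_mono (μ := ν) (Iic_subset_Iic.2 (le_max_right x n))
      linarith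
    exact this.mono_set (Iic_subset_Iic.2 (le_max_left x n))
  refine (aecover_Iic tendsto_id).integrable_of_integral_bounded_of_nonneg_ae 1 hIic
    (ae_of_all _ hf) (Eventually.of_forall fun x => ?_)
  rw [← hcdf]
  exact measureReal_le_one

theorem eq_withDensity_of_measureReal_Iic_eq_integral (hf : 0 ≤ f)
    (hcdf : ∀ x, ν.real (Iic x) = ∫ t in Iic x, f t) :
    ν = volume.withDensity fun t => ENNReal.ofReal (f t) := by
  have hfi := integrable_of_measureReal_Iic_eq_integral hf hcdf
  have := isFiniteMeasure_withDensity_ofReal hfi.2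
  refine Measure.ext_of_Iic _ _ fun x => ?_
  rw [withDensity_apply _ measurableSet_Iic,
    ← ofReal_integral_eq_lintegral_ofReal hfi.integrableOn (ae_of_all _ hf), ← hcdf,
    ofReal_measureReal]

theorem setIntegral_eq_setIntegral_mul_of_measureReal_Iic_eq_integral (hf : 0 ≤ f)
    (hcdf : ∀ x, ν.real (Iic x) = ∫ t in Iic x, f t) (g : ℝ → ℝ) (s : Set ℝ) :
    ∫ x in s, g x ∂ν = ∫ x in s, g x * f x := by
  have hfi := integrable_of_measureReal_Iic_eq_integral hf hcdf
  rw [eq_withDensity_of_measureReal_Iic_eq_integral hf hcdf,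
    setIntegral_withDensity_eq_setIntegral_toReal_smul₀' s
      hfi.aemeasurable.ennreal_ofReal.restrict (ae_of_all _ fun _ => ENNReal.ofReal_lt_top) g]
  refine integral_congr_ae (ae_of_all _ fun x => ?_)
  simp only [ENNReal.toReal_ofReal (hf x), smul_eq_mul, mul_comm]

end Density

theorem integral_indicator_comp_fst_prod {α β : Type*} [MeasurableSpace α] [MeasurableSpace β]
    {μ : Measure α} {ν : Measure β} [SFinite μ] [SFinite ν] {S : Set (α × β)}
    (hS : MeasurableSet S) {φ : α → ℝ}
    (h : Integrable (S.indicator fun p => φ p.1) (μ.prod ν)) :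
    ∫ p, S.indicator (fun p => φ p.1) p ∂μ.prod ν = ∫ x, ν.real (Prod.mk x ⁻¹' S) * φ x ∂μ := by
  rw [integral_prod _ h]
  refine integral_congr_ae (ae_of_all _ fun x => ?_)
  change ∫ y, (Prod.mk x ⁻¹' S).indicator (fun _ => φ x) y ∂ν = _
  rw [integral_indicator_const _ (measurable_prodMk_left hS), smul_eq_mul]

theorem integral_comp_max_prod_self {ν : Measure ℝ} [SFinite ν] [NullSingletonClass ν]
    {φ : ℝ → ℝ} (h : Integrable (fun p : ℝ × ℝ => φ (max p.1 p.2)) (ν.prod ν)) :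
    ∫ p, φ (max p.1 p.2) ∂ν.prod ν = 2 * ∫ x, ν.real (Iic x) * φ x ∂ν := by
  set S : Set (ℝ × ℝ) := {p | p.2 ≤ p.1}
  set T : Set (ℝ × ℝ) := {p | p.2 < p.1}
  have hS : MeasurableSet S := measurableSet_le measurable_snd measurable_fst
  have hT : MeasurableSet T := measurableSet_lt measurable_snd measurable_fst
  have hsplit : (fun p : ℝ × ℝ => φ (max p.1 p.2))
      = fun p => S.indicator (fun p => φ p.1) p + T.indicator (fun p => φ p.1) p.swap := by
    ext ⟨x, y⟩
    rcases le_or_gt y x with hyx | hxy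
    · simp [S, T, hyx, not_lt.2 hyx]
    · simp [S, T, hxy, not_le.2 hxy, hxy.le]
  have hSi : Integrable (S.indicator fun p => φ p.1) (ν.prod ν) :=
    (h.indicator hS).congr (ae_of_all _ fun p => by
      by_cases hp : p ∈ S
      · simp [hp, max_eq_left (show p.2 ≤ p.1 from hp)]
      · simp [hp])
  have hTi : Integrable (T.indicator fun p => φ p.1) (ν.prod ν) := by
    refine ((h.indicator (measurableSet_lt measurable_fst measurable_snd)).swap).congr
      (ae_of_all _ fun p => ?_)
    by_cases hp : p.2 < p.1
    · simp [hp, T, max_eq_right hp.le]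
    · simp [hp, T]
  have hTi' : Integrable (fun p => T.indicator (fun p => φ p.1) p.swap) (ν.prod ν) := hTi.swap
  rw [hsplit, integral_add hSi hTi', integral_prod_swap (T.indicator fun p => φ p.1),
    integral_indicator_comp_fst_prod hS hSi, integral_indicator_comp_fst_prod hT hTi, two_mul]
  congr 1
  refine integral_congr_ae (ae_of_all _ fun x => ?_)
  change ν.real (Iio x) * φ x = ν.real (Iic x) * φ x
  rw [measureReal_congr Iio_ae_eq_Iic]

theorem max_truncations_eq {τ₁ τ₂ c x y : ℝ} (hc0 : 0 ≤ c) (hcτ₁ : c < τ₁) (hτ₁₂ : τ₁ ≤ τ₂) :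
    max (max (if τ₁ ≤ x then x else 0) (if τ₂ ≤ y then y else 0)) c
      = if τ₂ ≤ max x y then max x y else if τ₁ ≤ x then x else c := by
  split_ifs <;> grind

theorem log_one_add_max_truncations_eq {τ₁ τ₂ c x y : ℝ} (hc0 : 0 ≤ c) (hcτ₁ : c < τ₁)
    (hτ₁₂ : τ₁ ≤ τ₂) :
    Real.log (1 + max (max (if τ₁ ≤ x then x else 0) (if τ₂ ≤ y then y else 0)) c)
      = (Ici τ₂).indicator (fun m => Real.log (1 + m)) (max x y)
        + (Ico τ₁ τ₂).indicator (fun t => Real.log (1 + t)) x * (Iio τ₂).indicator 1 y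
        + (Iio τ₁).indicator (fun _ => Real.log (1 + c)) x * (Iio τ₂).indicator 1 y := by
  rw [max_truncations_eq hc0 hcτ₁ hτ₁₂]
  simp only [indicator, mem_Ici, mem_Ico, mem_Iio, Pi.one_apply]
  split_ifs <;> grind

theorem measurable_log_one_add_max_truncations (τ₁ τ₂ c : ℝ) :
    Measurable fun p : ℝ × ℝ => Real.log (1 + max (max (if τ₁ ≤ p.1 then p.1 else 0)
      (if τ₂ ≤ p.2 then p.2 else 0)) c) := by
  have htrunc : ∀ τ : ℝ, Measurable fun t : ℝ => if τ ≤ t then t else 0 := fun τ =>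
    Measurable.ite measurableSet_Ici measurable_id measurable_const
  exact Real.measurable_log.comp (measurable_const.add
    ((((htrunc τ₁).comp measurable_fst).max ((htrunc τ₂).comp measurable_snd)).max
      measurable_const))

theorem integral_log_one_add_max_truncations_prod {ν : Measure ℝ} [IsFiniteMeasure ν]
    [NullSingletonClass ν]
    (hint : Integrable (fun p : ℝ × ℝ => Real.log (1 + max p.1 p.2)) (ν.prod ν))
    {τ₁ τ₂ c : ℝ} (hc0 : 0 ≤ c) (hcτ₁ : c < τ₁) (hτ₁₂ : τ₁ ≤ τ₂) :
    ∫ p, Real.log (1 + max (max (if τ₁ ≤ p.1 then p.1 else 0)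
        (if τ₂ ≤ p.2 then p.2 else 0)) c) ∂ν.prod ν
      = 2 * (∫ x in Ici τ₂, ν.real (Iic x) * Real.log (1 + x) ∂ν)
        + ν.real (Iic τ₂) * (∫ x in Ico τ₁ τ₂, Real.log (1 + x) ∂ν)
        + Real.log (1 + c) * ν.real (Iic τ₁) * ν.real (Iic τ₂) := by
  have hlog : ContinuousOn (fun t : ℝ => Real.log (1 + t)) (Icc τ₁ τ₂) :=
    (continuousOn_const.add continuousOn_id).log fun t ht =>
      (show 0 < 1 + t by linarith [ht.1]).ne'
  have h₁ : Integrable (fun p : ℝ × ℝ =>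
      (Ici τ₂).indicator (fun m => Real.log (1 + m)) (max p.1 p.2)) (ν.prod ν) :=
    hint.mono (((by fun_prop : Measurable fun t : ℝ => Real.log (1 + t)).indicator
        measurableSet_Ici).comp (measurable_fst.max measurable_snd)).aestronglyMeasurable
      (ae_of_all _ fun p => norm_indicator_le_norm_self _ _)
  have h₂ : Integrable (fun p : ℝ × ℝ => (Ico τ₁ τ₂).indicator (fun t => Real.log (1 + t)) p.1
      * (Iio τ₂).indicator 1 p.2) (ν.prod ν) := by
    refine Integrable.mul_prod ?_ ((integrable_const 1).indicator measurableSet_Iio)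
    exact (integrable_indicator_iff measurableSet_Ico).2
      ((hlog.integrableOn_compact isCompact_Icc).mono_set Ico_subset_Icc_self)
  have h₃ : Integrable (fun p : ℝ × ℝ => (Iio τ₁).indicator (fun _ => Real.log (1 + c)) p.1
      * (Iio τ₂).indicator 1 p.2) (ν.prod ν) :=
    ((integrable_const _).indicator measurableSet_Iio).mul_prod
      ((integrable_const 1).indicator measurableSet_Iio)
  have h₁₂ : Integrable (fun p : ℝ × ℝ =>
      (Ici τ₂).indicator (fun m => Real.log (1 + m)) (max p.1 p.2)
        + (Ico τ₁ τ₂).indicator (fun t => Real.log (1 + t)) p.1 * (Iio τ₂).indicator 1 p.2)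
      (ν.prod ν) := h₁.add h₂
  simp_rw [log_one_add_max_truncations_eq hc0 hcτ₁ hτ₁₂]
  rw [integral_add h₁₂ h₃, integral_add h₁ h₂, integral_comp_max_prod_self h₁,
    integral_prod_mul, integral_prod_mul, ← integral_indicator measurableSet_Ici,
    ← integral_indicator measurableSet_Ico,
    integral_indicator_one measurableSet_Iio, integral_indicator_const _ measurableSet_Iio,
    measureReal_congr (Iio_ae_eq_Iic (a := τ₁)), measureReal_congr (Iio_ae_eq_Iic (a := τ₂)),
    smul_eq_mul]
  simp only [indicator_mul_right]
  ring

theorem rate_below_both_thresholds_general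
    {Ω : Type*} [MeasurableSpace Ω] (μ : Measure Ω) [IsProbabilityMeasure μ]
    (X Y : Ω → ℝ) (hXm : Measurable X) (hYm : Measurable Y)
    (hindep : IndepFun X Y μ)
    (F f : ℝ → ℝ)
    (hFX : ∀ x, F x = (μ {ω | X ω ≤ x}).toReal)
    (hFY : ∀ x, F x = (μ {ω | Y ω ≤ x}).toReal)
    (hFdens : ∀ x, F x = ∫ t in Set.Iic x, f t)
    (hfpos : ∀ x, 0 ≤ x → 0 < f x) (hfneg : ∀ x, x < 0 → f x = 0)
    (hInt : Integrable (fun ω => Real.log (1 + max (X ω) (Y ω))) μ)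
    (τ₁ τ₂ c : ℝ) (hc0 : 0 ≤ c) (hcτ₁ : c < τ₁) (hτ₁₂ : τ₁ ≤ τ₂) :
    ∫ ω, Real.log (1 + max (max (if τ₁ ≤ X ω then X ω else 0)
        (if τ₂ ≤ Y ω then Y ω else 0)) c) ∂μ
      = (∫ x in Set.Ioi τ₂, Real.log (1 + x) * (2 * F x * f x))
        + F τ₂ * (∫ x in τ₁..τ₂, Real.log (1 + x) * f x)
        + Real.log (1 + c) * F τ₁ * F τ₂ := by
  have hf : 0 ≤ f := fun x =>
    (le_or_gt 0 x).elim (fun hx => (hfpos x hx).le) fun hx => (hfneg x hx).ge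
  set ν := μ.map X
  have : IsProbabilityMeasure ν := Measure.isProbabilityMeasure_map hXm.aemeasurable
  have : IsProbabilityMeasure (μ.map Y) := Measure.isProbabilityMeasure_map hYm.aemeasurable
  have hνF : ∀ x, ν.real (Iic x) = F x := fun x => by
    rw [hFX, map_measureReal_apply hXm measurableSet_Iic]; rfl
  have hYν : μ.map Y = ν := Measure.eq_of_cdf _ _ <| StieltjesFunction.ext fun x => by
    rw [cdf_eq_real, cdf_eq_real, hνF, hFY, map_measureReal_apply hYm measurableSet_Iic]; rfl
  have hcdf : ∀ x, ν.real (Iic x) = ∫ t in Iic x, f t := fun x => (hνF x).trans (hFdens x)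
  have : NullSingletonClass ν := by
    rw [eq_withDensity_of_measureReal_Iic_eq_integral hf hcdf]; infer_instance
  have hjoint : μ.map (fun ω => (X ω, Y ω)) = ν.prod ν := by
    rw [(indepFun_iff_map_prod_eq_prod_map_map hXm.aemeasurable hYm.aemeasurable).1 hindep, hYν]
  have hint : Integrable (fun p : ℝ × ℝ => Real.log (1 + max p.1 p.2)) (ν.prod ν) := by
    rw [← hjoint, integrable_map_measure (by fun_prop : Measurable _).aestronglyMeasurable
      (by fun_prop)]
    exact hInt
  rw [← integral_map (hXm.prodMk hYm).aemeasurable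
      (measurable_log_one_add_max_truncations τ₁ τ₂ c).aestronglyMeasurable, hjoint,
    integral_log_one_add_max_truncations_prod hint hc0 hcτ₁ hτ₁₂]
  simp only [setIntegral_eq_setIntegral_mul_of_measureReal_Iic_eq_integral hf hcdf, hνF]
  rw [integral_Ici_eq_integral_Ioi, ← integral_const_mul, intervalIntegral.integral_of_le hτ₁₂,
    integral_Ioc_eq_integral_Ioo, ← integral_Ico_eq_integral_Ioo]
  congr 2
  refine integral_congr_ae (ae_of_all _ fun x => ?_)
  ring

theorem rate_below_both_thresholds
    {Ω : Type*} [MeasurableSpace Ω] (μ : Measure Ω) [IsProbabilityMeasure μ]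
    (X Y : Ω → ℝ) (hXm : Measurable X) (hYm : Measurable Y)
    (hX0 : ∀ ω, 0 ≤ X ω) (hY0 : ∀ ω, 0 ≤ Y ω)
    (hindep : IndepFun X Y μ)
    (F f : ℝ → ℝ)
    (hFX : ∀ x, F x = (μ {ω | X ω ≤ x}).toReal)
    (hFY : ∀ x, F x = (μ {ω | Y ω ≤ x}).toReal)
    (hFcont : Continuous F) (hF0 : F 0 = 0)
    (hFdens : ∀ x, F x = ∫ t in Set.Iic x, f t)
    (hfpos : ∀ x, 0 ≤ x → 0 < f x) (hfneg : ∀ x, x < 0 → f x = 0)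
    (hInt : Integrable (fun ω => Real.log (1 + max (X ω) (Y ω))) μ)
    (τ₁ τ₂ c : ℝ) (hc0 : 0 ≤ c) (hcτ₁ : c < τ₁) (hτ₁₂ : τ₁ ≤ τ₂) :
    ∫ ω, Real.log (1 + max (max (if τ₁ ≤ X ω then X ω else 0)
        (if τ₂ ≤ Y ω then Y ω else 0)) c) ∂μ
      = (∫ x in Set.Ioi τ₂, Real.log (1 + x) * (2 * F x * f x))
        + F τ₂ * (∫ x in τ₁..τ₂, Real.log (1 + x) * f x)
        + Real.log (1 + c) * F τ₁ * F τ₂ :=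
  rate_below_both_thresholds_general μ X Y hXm hYm hindep F f hFX hFY hFdens hfpos hfneg hInt τ₁ τ₂
    c hc0 hcτ₁ hτ₁₂
end

section
/- Let X and Y be independent nonnegative real random variables with common cumulative distribution function F, where F is continuous, F(0) = 0, and F has a density f with support [0,∞). Let 0 ≤ τ₁ ≤ c ≤ τ₂. Then E[ log(1 + max( X·1{X ≥ τ₁}, Y·1{Y ≥ τ₂}, c )) ] = ∫_{τ₂}^{∞} log(1+x)·2F(x)f(x) dx + F(τ₂)·∫_{c}^{τ₂} log(1+x)·f(x) dx + log(1+c)·F(τ₂)·F(c). -/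
/-!
Since `τ₁ ≤ c`, truncating `X` at `τ₁` is invisible once the maximum with `c` is taken, so the
quantity is `log (1 + max X Z)` with `Z = Y` on `{Y ≥ τ₂}` and `Z = c` otherwise. Integrating
out `X` first gives `G t = F t · log (1 + t) + ∫_{(t, ∞)} log (1 + x) dF(x)` at `t = Z`. The event
`{Y < τ₂}` contributes `F τ₂ · G c`; on `{Y ≥ τ₂}`, Fubini over the triangle `τ₂ ≤ y < x` turns
`∫_{[τ₂, ∞)} G dF` into `∫_{(τ₂, ∞)} (2 F x - F τ₂) log (1 + x) dF(x)`. Finally the law of `X`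
and `Y` is `f · volume`, because both have the cdf `F = ∫_{(-∞, x]} f`.
-/

open MeasureTheory ProbabilityTheory Set Filter

noncomputable def replaceBelow (τ c y : ℝ) : ℝ := if τ ≤ y then y else c

theorem measurable_replaceBelow (τ c : ℝ) : Measurable (replaceBelow τ c) :=
  Measurable.ite measurableSet_Ici measurable_id measurable_const

theorem norm_comp_max_le (φ : ℝ → ℝ) (a b : ℝ) : ‖φ (max a b)‖ ≤ ‖φ a‖ + ‖φ b‖ := by
  rcases le_total a b with h | h <;> simp [h]

theorem max_truncated_eq_max_replaceBelow {x y τ₁ τ₂ c : ℝ} (hx : 0 ≤ x) (hy : 0 ≤ y)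
    (h₁ : τ₁ ≤ c) (h₂ : c ≤ τ₂) :
    max (max (if τ₁ ≤ x then x else 0) (if τ₂ ≤ y then y else 0)) c
      = max x (replaceBelow τ₂ c y) := by
  unfold replaceBelow
  split_ifs <;> simp only [max_def] <;> split_ifs <;> linarith

section MaxIntegrals

variable {ν : Measure ℝ} [IsFiniteMeasure ν] {φ : ℝ → ℝ}

theorem integral_comp_max_const (hφm : Measurable φ) (hφ : Integrable φ ν) (t : ℝ) :
    ∫ x, φ (max x t) ∂ν = ν.real (Iic t) * φ t + ∫ x in Ioi t, φ x ∂ν := by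
  have hint : Integrable (fun x => φ (max x t)) ν :=
    (hφ.norm.add (integrable_const ‖φ t‖)).mono'
      (hφm.comp (measurable_id.max measurable_const)).aestronglyMeasurable
      (ae_of_all _ fun x => by simpa using norm_comp_max_le φ x t)
  rw [← integral_add_compl measurableSet_Iic hint, compl_Iic,
    setIntegral_congr_fun measurableSet_Iic fun x (hx : x ≤ t) => by rw [max_eq_right hx],
    setIntegral_congr_fun measurableSet_Ioi fun x (hx : t < x) => by rw [max_eq_left hx.le],
    setIntegral_const, smul_eq_mul]

theorem integrable_measureReal_Iic_mul (hφ : Integrable φ ν) :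
    Integrable (fun x => ν.real (Iic x) * φ x) ν :=
  hφ.bdd_mul (c := ν.real univ)
    (Monotone.measurable fun _ _ h => measureReal_mono (Iic_subset_Iic.mpr h)).aestronglyMeasurable
    (ae_of_all _ fun x => by
      rw [Real.norm_of_nonneg measureReal_nonneg]
      exact measureReal_mono (subset_univ _))

theorem integrable_setIntegral_Ioi (hφ : Integrable φ ν) :
    Integrable (fun y => ∫ x in Ioi y, φ x ∂ν) ν := by
  have hK : Integrable ({p : ℝ × ℝ | p.1 < p.2}.indicator fun p => φ p.2) (ν.prod ν) :=
    (hφ.comp_snd ν).indicator (measurableSet_lt measurable_fst measurable_snd)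
  refine hK.integral_prod_left.congr (ae_of_all _ fun y => ?_)
  simp only [← integral_indicator measurableSet_Ioi, indicator_apply, mem_ofPred_eq, mem_Ioi]

theorem setIntegral_Ici_setIntegral_Ioi (hφ : Integrable φ ν) (a : ℝ) :
    ∫ y in Ici a, (∫ x in Ioi y, φ x ∂ν) ∂ν = ∫ x in Ioi a, ν.real (Ico a x) * φ x ∂ν := by
  set K : ℝ × ℝ → ℝ := {p | a ≤ p.1 ∧ p.1 < p.2}.indicator fun p => φ p.2
  have hK : Integrable K (ν.prod ν) := (hφ.comp_snd ν).indicator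
    ((measurableSet_le measurable_const measurable_fst).inter
      (measurableSet_lt measurable_fst measurable_snd))
  have hy : ∀ y, (Ici a).indicator (fun y => ∫ x in Ioi y, φ x ∂ν) y = ∫ x, K (y, x) ∂ν := by
    intro y
    by_cases hay : a ≤ y <;>
      simp [K, hay, indicator_apply, ← integral_indicator measurableSet_Ioi]
  have hx : ∀ x, ∫ y, K (y, x) ∂ν = ν.real (Ico a x) * φ x := by
    intro x
    rw [← smul_eq_mul, ← setIntegral_const, ← integral_indicator measurableSet_Ico]
    congr 1 with y
  rw [← integral_indicator measurableSet_Ici, integral_congr_ae (ae_of_all _ hy),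
    integral_integral_swap (f := fun y x => K (y, x)) hK, integral_congr_ae (ae_of_all _ hx),
    setIntegral_eq_integral_of_forall_compl_eq_zero fun x hx => by
      rw [Ico_eq_empty (by simpa using hx), measureReal_empty, zero_mul]]

theorem integrable_prod_comp_max_replaceBelow (hφm : Measurable φ) (hφ : Integrable φ ν)
    (τ c : ℝ) : Integrable (fun p : ℝ × ℝ => φ (max p.1 (replaceBelow τ c p.2))) (ν.prod ν) := by
  refine (((hφ.norm.comp_fst ν).add (hφ.norm.comp_snd ν)).add (integrable_const ‖φ c‖)).mono'
    (hφm.comp (measurable_fst.max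
      ((measurable_replaceBelow τ c).comp measurable_snd))).aestronglyMeasurable
    (ae_of_all _ fun p => ?_)
  have hz : ‖φ (replaceBelow τ c p.2)‖ ≤ ‖φ p.2‖ + ‖φ c‖ := by
    unfold replaceBelow
    split_ifs <;> simp
  simp only [Pi.add_apply]
  linarith [norm_comp_max_le φ p.1 (replaceBelow τ c p.2)]

variable [NullSingletonClass ν]

theorem measureReal_Ico_eq_sub {a x : ℝ} (hax : a ≤ x) :
    ν.real (Ico a x) = ν.real (Iic x) - ν.real (Iic a) := by
  rw [measureReal_congr Ico_ae_eq_Ioc, ← Iic_union_Ioc_eq_Iic hax,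
    measureReal_union (Iic_disjoint_Ioc le_rfl) measurableSet_Ioc, add_sub_cancel_left]

theorem setIntegral_Ici_integral_comp_max (hφm : Measurable φ) (hφ : Integrable φ ν) (τ : ℝ) :
    ∫ y in Ici τ, (∫ x, φ (max x y) ∂ν) ∂ν
      = ∫ x in Ioi τ, (2 * ν.real (Iic x) - ν.real (Iic τ)) * φ x ∂ν := by
  have hF := integrable_measureReal_Iic_mul hφ
  have hFτ : Integrable (fun x => (ν.real (Iic x) - ν.real (Iic τ)) * φ x) ν :=
    (hF.sub (hφ.const_mul (ν.real (Iic τ)))).congr (ae_of_all _ fun x => by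
      simp only [Pi.sub_apply]; ring)
  have hIco : ∫ x in Ioi τ, ν.real (Ico τ x) * φ x ∂ν
      = ∫ x in Ioi τ, (ν.real (Iic x) - ν.real (Iic τ)) * φ x ∂ν :=
    setIntegral_congr_fun measurableSet_Ioi fun x (hx : τ < x) => by
      rw [measureReal_Ico_eq_sub hx.le]
  simp_rw [integral_comp_max_const hφm hφ]
  rw [integral_add hF.integrableOn (integrable_setIntegral_Ioi hφ).integrableOn,
    setIntegral_Ici_setIntegral_Ioi hφ, integral_Ici_eq_integral_Ioi, hIco,
    ← integral_add hF.integrableOn hFτ.integrableOn]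
  congr 1 with x
  ring

theorem integral_prod_comp_max_replaceBelow (hφm : Measurable φ) (hφ : Integrable φ ν)
    {c τ : ℝ} (hcτ : c ≤ τ) :
    ∫ p, φ (max p.1 (replaceBelow τ c p.2)) ∂(ν.prod ν)
      = ∫ x in Ioi τ, 2 * ν.real (Iic x) * φ x ∂ν + ν.real (Iic τ) * ∫ x in Ioc c τ, φ x ∂ν
        + φ c * ν.real (Iic τ) * ν.real (Iic c) := by
  have hψ := integrable_prod_comp_max_replaceBelow hφm hφ τ c
  have hIci : ∫ y in Ici τ, (∫ x, φ (max x (replaceBelow τ c y)) ∂ν) ∂ν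
      = ∫ x in Ioi τ, (2 * ν.real (Iic x) - ν.real (Iic τ)) * φ x ∂ν := by
    rw [← setIntegral_Ici_integral_comp_max hφm hφ τ]
    exact setIntegral_congr_fun measurableSet_Ici fun y (hy : τ ≤ y) => by
      simp [replaceBelow, hy]
  have hIio : ∫ y in Iio τ, (∫ x, φ (max x (replaceBelow τ c y)) ∂ν) ∂ν
      = ν.real (Iic τ) * (ν.real (Iic c) * φ c + ∫ x in Ioi c, φ x ∂ν) := by
    rw [setIntegral_congr_fun measurableSet_Iio (g := fun _ => ∫ x, φ (max x c) ∂ν)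
      fun y (hy : y < τ) => by simp [replaceBelow, not_le.mpr hy], setIntegral_const,
      integral_comp_max_const hφm hφ, measureReal_congr Iio_ae_eq_Iic, smul_eq_mul]
  have hIoi : ∫ x in Ioi c, φ x ∂ν = ∫ x in Ioc c τ, φ x ∂ν + ∫ x in Ioi τ, φ x ∂ν := by
    rw [← setIntegral_union (Ioc_disjoint_Ioi le_rfl) measurableSet_Ioi hφ.integrableOn
      hφ.integrableOn, Ioc_union_Ioi_eq_Ioi hcτ]
  have hsub : ∫ x in Ioi τ, (2 * ν.real (Iic x) - ν.real (Iic τ)) * φ x ∂ν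
      = ∫ x in Ioi τ, 2 * ν.real (Iic x) * φ x ∂ν - ν.real (Iic τ) * ∫ x in Ioi τ, φ x ∂ν := by
    have h2F : Integrable (fun x => 2 * ν.real (Iic x) * φ x) ν := by
      simpa only [mul_assoc] using (integrable_measureReal_Iic_mul hφ).const_mul 2
    rw [← integral_const_mul, ← integral_sub h2F.integrableOn (hφ.const_mul _).integrableOn]
    congr 1 with x
    ring
  rw [integral_prod_symm _ hψ, ← integral_add_compl measurableSet_Ici hψ.integral_prod_right,
    compl_Ici, hIci, hIio, hIoi, hsub]
  ring

end MaxIntegrals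

section Density

variable {Ω : Type*} [MeasurableSpace Ω] {μ : Measure Ω} {X : Ω → ℝ} {f : ℝ → ℝ}

/-- Otherwise the integrals `∫_{(-∞, b]} f` vanish for all `b ≥ a`, while the cdf tends to `1`. -/
theorem integrableOn_Iic_of_cdf [IsProbabilityMeasure μ] (hX : AEMeasurable X μ)
    (hcdf : ∀ x, μ.real {ω | X ω ≤ x} = ∫ t in Iic x, f t) (a : ℝ) : IntegrableOn f (Iic a) := by
  by_contra h
  have hzero : ∀ᶠ b in atTop, μ.map X (Iic b) = 0 := (eventually_ge_atTop a).mono fun b hb => by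
    have hb' : ¬IntegrableOn f (Iic b) := fun hb' => h (hb'.mono_set (Iic_subset_Iic.mpr hb))
    rw [Measure.map_apply_of_aemeasurable hX measurableSet_Iic, ← measureReal_eq_zero_iff]
    exact (hcdf b).trans (integral_undef hb')
  have h01 := tendsto_nhds_unique (tendsto_measure_Iic_atTop (μ.map X))
    (tendsto_const_nhds.congr' (hzero.mono fun _ h => h.symm))
  simp [Measure.map_apply_of_aemeasurable hX MeasurableSet.univ] at h01

theorem aestronglyMeasurable_of_integrableOn_Iic {E : Type*} [NormedAddCommGroup E]
    {ν : Measure ℝ} {g : ℝ → E} (hg : ∀ a, IntegrableOn g (Iic a) ν) :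
    AEStronglyMeasurable g ν := by
  have h := (aestronglyMeasurable_iUnion_iff (μ := ν) (s := fun r : ℚ => Iic (r : ℝ))).mpr
    fun r => (hg r).aestronglyMeasurable
  rwa [Real.iUnion_Iic_rat, Measure.restrict_univ] at h

theorem map_eq_withDensity_of_cdf [IsProbabilityMeasure μ] (hX : AEMeasurable X μ)
    (hf : ∀ x, 0 ≤ f x) (hcdf : ∀ x, μ.real {ω | X ω ≤ x} = ∫ t in Iic x, f t) :
    μ.map X = volume.withDensity fun x => ENNReal.ofReal (f x) := by
  refine Measure.ext_of_Iic _ _ fun a => ?_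
  rw [Measure.map_apply_of_aemeasurable hX measurableSet_Iic, withDensity_apply _ measurableSet_Iic,
    ← ofReal_integral_eq_lintegral_ofReal (integrableOn_Iic_of_cdf hX hcdf a)
      (ae_of_all _ fun x => hf x), ← hcdf, ofReal_measureReal]
  rfl

theorem integrable_log_one_add_map {Y : Ω → ℝ} (hX : Measurable X) (hX0 : ∀ ω, 0 ≤ X ω)
    (hInt : Integrable (fun ω => Real.log (1 + max (X ω) (Y ω))) μ) :
    Integrable (fun x => Real.log (1 + x)) (μ.map X) := by
  have hlog : Measurable fun x : ℝ => Real.log (1 + x) := by fun_prop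
  rw [integrable_map_measure hlog.aestronglyMeasurable hX.aemeasurable]
  refine hInt.mono' (hlog.comp hX).aestronglyMeasurable (ae_of_all _ fun ω => ?_)
  rw [Function.comp_apply, Real.norm_of_nonneg (Real.log_nonneg (by linarith [hX0 ω]))]
  exact Real.log_le_log (by linarith [hX0 ω]) (by linarith [le_max_left (X ω) (Y ω)])

end Density

theorem setIntegral_withDensity_ofReal {α : Type*} [MeasurableSpace α] {ν : Measure α}
    {f : α → ℝ} (hfm : AEMeasurable f ν) (hf : ∀ x, 0 ≤ f x) (g : α → ℝ) {s : Set α}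
    (hs : MeasurableSet s) :
    ∫ x in s, g x ∂(ν.withDensity fun x => ENNReal.ofReal (f x)) = ∫ x in s, g x * f x ∂ν := by
  rw [setIntegral_withDensity_eq_setIntegral_toReal_smul₀ hfm.ennreal_ofReal.restrict
    (ae_of_all _ fun _ => ENNReal.ofReal_lt_top) g hs]
  simp only [ENNReal.toReal_ofReal (hf _), smul_eq_mul, mul_comm]

theorem rate_between_thresholds_general
    {Ω : Type*} [MeasurableSpace Ω] (μ : Measure Ω) [IsProbabilityMeasure μ]
    (X Y : Ω → ℝ) (hXm : Measurable X) (hYm : Measurable Y)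
    (hX0 : ∀ ω, 0 ≤ X ω) (hY0 : ∀ ω, 0 ≤ Y ω)
    (hindep : IndepFun X Y μ)
    (F f : ℝ → ℝ)
    (hFX : ∀ x, F x = (μ {ω | X ω ≤ x}).toReal)
    (hFY : ∀ x, F x = (μ {ω | Y ω ≤ x}).toReal)
    (hFdens : ∀ x, F x = ∫ t in Set.Iic x, f t)
    (hfpos : ∀ x, 0 ≤ x → 0 < f x) (hfneg : ∀ x, x < 0 → f x = 0)
    (hInt : Integrable (fun ω => Real.log (1 + max (X ω) (Y ω))) μ)
    (τ₁ τ₂ c : ℝ) (hτ₁c : τ₁ ≤ c) (hcτ₂ : c ≤ τ₂) :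
    ∫ ω, Real.log (1 + max (max (if τ₁ ≤ X ω then X ω else 0)
        (if τ₂ ≤ Y ω then Y ω else 0)) c) ∂μ
      = (∫ x in Set.Ioi τ₂, Real.log (1 + x) * (2 * F x * f x))
        + F τ₂ * (∫ x in c..τ₂, Real.log (1 + x) * f x)
        + Real.log (1 + c) * F τ₂ * F c := by
  have hf0 : ∀ x, 0 ≤ f x := fun x =>
    (le_or_gt 0 x).elim (fun hx => (hfpos x hx).le) fun hx => (hfneg x hx).ge
  have hcdfX (x : ℝ) : μ.real {ω | X ω ≤ x} = ∫ t in Iic x, f t := (hFX x).symm.trans (hFdens x)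
  have hcdfY (x : ℝ) : μ.real {ω | Y ω ≤ x} = ∫ t in Iic x, f t := (hFY x).symm.trans (hFdens x)
  set W := volume.withDensity fun x => ENNReal.ofReal (f x)
  have hWX : μ.map X = W := map_eq_withDensity_of_cdf hXm.aemeasurable hf0 hcdfX
  have hlaw : μ.map (fun ω => (X ω, Y ω)) = W.prod W := by
    rw [(indepFun_iff_map_prod_eq_prod_map_map hXm.aemeasurable hYm.aemeasurable).mp hindep, hWX,
      map_eq_withDensity_of_cdf hYm.aemeasurable hf0 hcdfY]
  have : IsProbabilityMeasure W := hWX ▸ Measure.isProbabilityMeasure_map hXm.aemeasurable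
  have hF (x : ℝ) : W.real (Iic x) = F x := by
    rw [← hWX, map_measureReal_apply hXm measurableSet_Iic, hFX]; rfl
  have hfm : AEMeasurable f := (aestronglyMeasurable_of_integrableOn_Iic
    (integrableOn_Iic_of_cdf hXm.aemeasurable hcdfX)).aemeasurable
  have hφm : Measurable fun x : ℝ => Real.log (1 + x) := by fun_prop
  have hψm := hφm.comp (measurable_fst.max ((measurable_replaceBelow τ₂ c).comp measurable_snd))
  simp_rw [max_truncated_eq_max_replaceBelow (hX0 _) (hY0 _) hτ₁c hcτ₂]
  rw [← integral_map (φ := fun ω => (X ω, Y ω)) (hXm.prodMk hYm).aemeasurable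
      (f := fun p => Real.log (1 + max p.1 (replaceBelow τ₂ c p.2))) hψm.aestronglyMeasurable,
    hlaw, integral_prod_comp_max_replaceBelow hφm (hWX ▸ integrable_log_one_add_map hXm hX0 hInt)
      hcτ₂, setIntegral_withDensity_ofReal hfm hf0 _ measurableSet_Ioi,
    setIntegral_withDensity_ofReal hfm hf0 _ measurableSet_Ioc,
    intervalIntegral.integral_of_le hcτ₂]
  simp only [hF]
  congr 2
  exact setIntegral_congr_fun measurableSet_Ioi fun x _ => by ring

theorem rate_between_thresholds
    {Ω : Type*} [MeasurableSpace Ω] (μ : Measure Ω) [IsProbabilityMeasure μ]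
    (X Y : Ω → ℝ) (hXm : Measurable X) (hYm : Measurable Y)
    (hX0 : ∀ ω, 0 ≤ X ω) (hY0 : ∀ ω, 0 ≤ Y ω)
    (hindep : IndepFun X Y μ)
    (F f : ℝ → ℝ)
    (hFX : ∀ x, F x = (μ {ω | X ω ≤ x}).toReal)
    (hFY : ∀ x, F x = (μ {ω | Y ω ≤ x}).toReal)
    (hFcont : Continuous F) (hF0 : F 0 = 0)
    (hFdens : ∀ x, F x = ∫ t in Set.Iic x, f t)
    (hfpos : ∀ x, 0 ≤ x → 0 < f x) (hfneg : ∀ x, x < 0 → f x = 0)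
    (hInt : Integrable (fun ω => Real.log (1 + max (X ω) (Y ω))) μ)
    (τ₁ τ₂ c : ℝ) (hτ₁0 : 0 ≤ τ₁) (hτ₁c : τ₁ ≤ c) (hcτ₂ : c ≤ τ₂) :
    ∫ ω, Real.log (1 + max (max (if τ₁ ≤ X ω then X ω else 0)
        (if τ₂ ≤ Y ω then Y ω else 0)) c) ∂μ
      = (∫ x in Set.Ioi τ₂, Real.log (1 + x) * (2 * F x * f x))
        + F τ₂ * (∫ x in c..τ₂, Real.log (1 + x) * f x)
        + Real.log (1 + c) * F τ₂ * F c :=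
  rate_between_thresholds_general μ X Y hXm hYm hX0 hY0 hindep F f hFX hFY hFdens hfpos hfneg hInt
    τ₁ τ₂ c hτ₁c hcτ₂
end

section
/- Let F be a continuous cumulative distribution function with F(0) = 0 and a density f supported on [0,∞), so that F is strictly increasing on [0,∞) with inverse F⁻¹ : [0,1) → [0,∞). Assume f is bounded in a neighborhood of 0, f is differentiable, and f′(F⁻¹(x)) ≤ −f(F⁻¹(x))/(1 + F⁻¹(x)) for all x ∈ [0,1). Let X and Y be independent random variables with common cdf F, fix λ ∈ (0,2] and a constant c ≥ 0. Then the map q ↦ E[ log(1 + max( X·1{X ≥ F⁻¹(1−(λ−q))}, Y·1{Y ≥ F⁻¹(1−q)}, c )) ] is nondecreasing in q on the interval max(0, λ−1) < q ≤ λ/2. -/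
/-!
Write `α_q = 1 - λ + q` and `β_q = 1 - q`, so that the two thresholds `a_q`, `b_q` satisfy
`F a_q = α_q` and `F b_q = β_q`, and let `T_q` be the truncated maximum. By the layer-cake formula
`E log (1 + T_q) = log (1 + c) + ∫_{t > c} P(T_q ≥ t) / (1 + t) dt`, and by independence
`P(T_q < t) = max(α_q, F t) · max(β_q, F t)` for `t > c`. At fixed `u = F t` the right derivative
in `q` of this product is `β_q - α_q` for `u ≤ α_q`, `-u` for `α_q < u < β_q` and `0` beyond, so
by Fubini it suffices that for every `q`
`(β_q - α_q) ∫_{(c, a_q]} dt / (1 + t) ≤ ∫_{(a_q, b_q)} F t / (1 + t) dt`.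
The condition on `f'` says that `(1 + t) f t` is nonincreasing on `[0, ∞)`. Hence, with
`K = (1 + a_q) f a_q`, we have `1 / (1 + t) ≤ f t / K` left of `a_q` and `≥` right of it, which
bounds the left side above and the right side below by `α_q (β_q - α_q) / K`.
-/

open MeasureTheory ProbabilityTheory Set

theorem hasDerivWithinAt_Ioi_max_const_add (s u x : ℝ) :
    HasDerivWithinAt (fun y => max (s + y) u) (if u ≤ s + x then 1 else 0) (Ioi x) x := by
  split_ifs with h
  · exact ((hasDerivAt_id x).const_add s).hasDerivWithinAt.congr
      (fun y hy => max_eq_left (by linarith [mem_Ioi.mp hy])) (max_eq_left h)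
  · refine ((hasDerivAt_const x u).congr_of_eventuallyEq ?_).hasDerivWithinAt
    filter_upwards [Iio_mem_nhds (show x < u - s by linarith)] with y hy
    exact max_eq_right (by linarith [mem_Iio.mp hy])

theorem hasDerivWithinAt_Ioi_max_const_sub (s u x : ℝ) :
    HasDerivWithinAt (fun y => max (s - y) u) (if u < s - x then -1 else 0) (Ioi x) x := by
  split_ifs with h
  · refine (((hasDerivAt_id x).const_sub s).congr_of_eventuallyEq ?_).hasDerivWithinAt
    filter_upwards [Iio_mem_nhds (show x < s - u by linarith)] with y hy
    exact max_eq_left (by linarith [mem_Iio.mp hy])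
  · exact (hasDerivAt_const x u).hasDerivWithinAt.congr
      (fun y hy => max_eq_right (by linarith [mem_Ioi.mp hy])) (max_eq_right (not_lt.mp h))

/-- The right derivative of `q ↦ max (s + q) u * max (r - q) u`, written at `α = s + q`,
`β = r - q`. -/
noncomputable def maxMulMaxRightDeriv (α β u : ℝ) : ℝ :=
  (if u ≤ α then max β u else 0) - (if u < β then max α u else 0)

theorem abs_maxMulMaxRightDeriv_le (α β u : ℝ) :
    |maxMulMaxRightDeriv α β u| ≤ |max β u| + |max α u| :=
  (abs_sub _ _).trans (add_le_add (by split_ifs <;> simp) (by split_ifs <;> simp))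

theorem measurable_maxMulMaxRightDeriv :
    Measurable fun p : ℝ × ℝ × ℝ => maxMulMaxRightDeriv p.1 p.2.1 p.2.2 :=
  (Measurable.ite (measurableSet_le (by fun_prop) (by fun_prop)) (by fun_prop)
    measurable_const).sub
      (Measurable.ite (measurableSet_lt (by fun_prop) (by fun_prop)) (by fun_prop)
        measurable_const)

theorem max_mul_max_sub_eq_integral (s r u : ℝ) {q₁ q₂ : ℝ} (hq : q₁ ≤ q₂) :
    max (s + q₂) u * max (r - q₂) u - max (s + q₁) u * max (r - q₁) u =
      ∫ q in q₁..q₂, maxMulMaxRightDeriv (s + q) (r - q) u := by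
  refine (intervalIntegral.integral_eq_sub_of_hasDeriv_right_of_le
    (f := fun q => max (s + q) u * max (r - q) u) hq (by fun_prop) (fun q _ => ?_) ?_).symm
  · exact ((hasDerivWithinAt_Ioi_max_const_add s u q).mul
      (hasDerivWithinAt_Ioi_max_const_sub r u q)).congr_deriv
        (by unfold maxMulMaxRightDeriv; split_ifs <;> ring)
  · exact IntervalIntegrable.mono_fun' (Continuous.intervalIntegrable (by fun_prop) _ _)
      (measurable_maxMulMaxRightDeriv.comp (f := fun q => (s + q, r - q, u))
        (by fun_prop)).aestronglyMeasurable
      (.of_forall fun q => abs_maxMulMaxRightDeriv_le _ _ _)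

theorem integrableOn_Icc_div_one_add {g : ℝ → ℝ} {x y : ℝ} (hx : -1 < x)
    (hg : ContinuousOn g (Icc x y)) : IntegrableOn (fun t => g t / (1 + t)) (Icc x y) :=
  (hg.div (by fun_prop) fun t ht => by linarith [ht.1]).integrableOn_Icc

theorem setLIntegral_Ioi_ofReal_le_of_setIntegral_Ioc_le {f g : ℝ → ℝ} {c B : ℝ} (hcB : c ≤ B)
    (hf : IntegrableOn f (Ioc c B)) (hg : IntegrableOn g (Ioc c B))
    (hf0 : ∀ t ∈ Ioc c B, 0 ≤ f t) (hg0 : ∀ t ∈ Ioc c B, 0 ≤ g t)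
    (hle : ∫ t in Ioc c B, f t ≤ ∫ t in Ioc c B, g t) (heq : EqOn f g (Ioi B)) :
    ∫⁻ t in Ioi c, ENNReal.ofReal (f t) ≤ ∫⁻ t in Ioi c, ENNReal.ofReal (g t) := by
  rw [← Ioc_union_Ioi_eq_Ioi hcB, lintegral_union measurableSet_Ioi (Ioc_disjoint_Ioi le_rfl),
    lintegral_union measurableSet_Ioi (Ioc_disjoint_Ioi le_rfl),
    setLIntegral_congr_fun measurableSet_Ioi fun t ht => congrArg ENNReal.ofReal (heq ht),
    ← ofReal_integral_eq_lintegral_ofReal hf (ae_restrict_of_forall_mem measurableSet_Ioc hf0),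
    ← ofReal_integral_eq_lintegral_ofReal hg (ae_restrict_of_forall_mem measurableSet_Ioc hg0)]
  gcongr

theorem integrableOn_Iic_of_continuousOn_Ici {f : ℝ → ℝ} (hf : ContinuousOn f (Ici 0))
    (hneg : ∀ x < 0, f x = 0) (y : ℝ) : IntegrableOn f (Iic y) := by
  refine ((integrableOn_zero.congr_fun (fun x hx => (hneg x hx).symm) measurableSet_Iio).union
    ((hf.mono Icc_subset_Ici_self).integrableOn_Icc (a := 0) (b := y))).mono_set fun x hx => ?_
  rcases lt_or_ge x 0 with h | h
  exacts [Or.inl h, Or.inr ⟨h, hx⟩]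

theorem antitoneOn_one_add_mul_of_hasDerivWithinAt {f f' : ℝ → ℝ}
    (hf : ∀ x, 0 ≤ x → HasDerivWithinAt f (f' x) (Ici 0) x)
    (hf' : ∀ x, 0 < x → f' x ≤ -f x / (1 + x)) :
    AntitoneOn (fun t => (1 + t) * f t) (Ici 0) := by
  refine antitoneOn_of_hasDerivWithinAt_nonpos (f' := fun x => 1 * f x + (1 + x) * f' x)
    (convex_Ici 0) ((continuousOn_const.add continuousOn_id).mul
      fun x hx => (hf x hx).continuousWithinAt) (fun x hx => ?_) (fun x hx => ?_)
  · rw [interior_Ici] at hx ⊢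
    exact ((hasDerivAt_id x).const_add 1).hasDerivWithinAt.mul
      ((hf x (le_of_lt hx)).mono Ioi_subset_Ici_self)
  · rw [interior_Ici] at hx
    linear_combination (le_div_iff₀ (by linarith [mem_Ioi.mp hx])).mp (hf' x hx)

section Density

variable {F f : ℝ → ℝ}

theorem sub_eq_setIntegral_Ioc (hfi : ∀ x, IntegrableOn f (Iic x))
    (hF : ∀ x, F x = ∫ t in Iic x, f t) {x y : ℝ} (h : x ≤ y) :
    F y - F x = ∫ t in Ioc x y, f t := by
  rw [hF, hF, intervalIntegral.integral_Iic_sub_Iic (hfi x) (hfi y),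
    intervalIntegral.integral_of_le h]

theorem monotoneOn_of_density_nonneg (hfi : ∀ x, IntegrableOn f (Iic x))
    (hF : ∀ x, F x = ∫ t in Iic x, f t) (hf0 : ∀ t, 0 ≤ t → 0 ≤ f t) : MonotoneOn F (Ici 0) :=
  fun x hx y _ hxy => sub_nonneg.mp <| (sub_eq_setIntegral_Ioc hfi hF hxy).symm ▸
    setIntegral_nonneg measurableSet_Ioc fun t ht => hf0 t (by linarith [ht.1, mem_Ici.mp hx])

theorem setIntegral_Ioc_sub_div_le (hfi : ∀ x, IntegrableOn f (Iic x))
    (hF : ∀ x, F x = ∫ t in Iic x, f t) (hFc : Continuous F) (hF0 : ∀ t, 0 ≤ F t)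
    (hf0 : ∀ t, 0 ≤ t → 0 ≤ f t) (hanti : AntitoneOn (fun t => (1 + t) * f t) (Ici 0))
    {a b c : ℝ} (hc : 0 ≤ c) (hca : c ≤ a) (hab : a ≤ b) (hfa : 0 < f a) :
    ∫ t in Ioc c a, (F b - F a) / (1 + t) ≤ ∫ t in Ioo a b, F t / (1 + t) := by
  have ha : 0 ≤ a := hc.trans hca
  have hmono := monotoneOn_of_density_nonneg hfi hF hf0
  set K := (1 + a) * f a
  have hK : 0 < K := by positivity
  have hleft : ∫ t in Ioc c a, 1 / (1 + t) ≤ F a / K := calc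
    ∫ t in Ioc c a, 1 / (1 + t) ≤ ∫ t in Ioc c a, f t / K := by
      refine setIntegral_mono_on ((integrableOn_Icc_div_one_add (by linarith)
        continuousOn_const).mono_set Ioc_subset_Icc_self)
        ((hfi a).mono_set Ioc_subset_Iic_self |>.div_const K) measurableSet_Ioc fun t ht => ?_
      rw [div_le_div_iff₀ (by linarith [ht.1]) hK]
      linarith [hanti (mem_Ici.mpr (by linarith [ht.1])) ha ht.2]
    _ = (F a - F c) / K := by rw [integral_div, sub_eq_setIntegral_Ioc hfi hF hca]
    _ ≤ F a / K := by gcongr; linarith [hF0 c]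
  have hright : F a * ((F b - F a) / K) ≤ ∫ t in Ioo a b, F t / (1 + t) := calc
    F a * ((F b - F a) / K) = ∫ t in Ioo a b, F a * (f t / K) := by
      rw [integral_const_mul, integral_div, ← integral_Ioc_eq_integral_Ioo,
        sub_eq_setIntegral_Ioc hfi hF hab]
    _ ≤ ∫ t in Ioo a b, F t / (1 + t) := by
      refine setIntegral_mono_on (((hfi b).mono_set (Ioo_subset_Ioc_self.trans
        Ioc_subset_Iic_self)).div_const K |>.const_mul (F a))
        ((integrableOn_Icc_div_one_add (by linarith) hFc.continuousOn).mono_set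
          Ioo_subset_Icc_self) measurableSet_Ioo fun t ht => ?_
      have ht0 : t ∈ Ici 0 := mem_Ici.mpr (by linarith [ht.1])
      have hft : f t / K ≤ 1 / (1 + t) := by
        rw [div_le_div_iff₀ hK (by linarith [ht.1])]
        linarith [hanti (mem_Ici.mpr ha) ht0 ht.1.le]
      calc F a * (f t / K) ≤ F t * (1 / (1 + t)) :=
            mul_le_mul (hmono ha ht0 ht.1.le) hft (div_nonneg (hf0 t ht0) hK.le) (hF0 t)
        _ = F t / (1 + t) := mul_one_div _ _
  calc ∫ t in Ioc c a, (F b - F a) / (1 + t)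
      = (F b - F a) * ∫ t in Ioc c a, 1 / (1 + t) := by
        rw [← integral_const_mul]; simp_rw [mul_one_div]
    _ ≤ (F b - F a) * (F a / K) := by
        gcongr
        exact sub_nonneg.mpr (hmono ha (ha.trans hab) hab)
    _ = F a * ((F b - F a) / K) := by ring
    _ ≤ _ := hright

theorem maxMulMaxRightDeriv_eq_indicator_sub_indicator (hFs : StrictMonoOn F (Ici 0))
    {a b t : ℝ} (ha : 0 ≤ a) (hab : a < b) (ht : 0 ≤ t) :
    maxMulMaxRightDeriv (F a) (F b) (F t) =
      (Iic a).indicator (fun _ => F b - F a) t - (Ioo a b).indicator F t := by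
  have hb : 0 ≤ b := ha.trans hab.le
  have hFab : F a < F b := hFs ha hb hab
  unfold maxMulMaxRightDeriv
  rcases le_or_gt t a with hta | hat
  · have hFt : F t ≤ F a := (hFs.le_iff_le ht ha).mpr hta
    rw [if_pos hFt, if_pos (hFt.trans_lt hFab), indicator_of_mem (mem_Iic.mpr hta),
      indicator_of_notMem fun h => (not_lt.mpr hta) h.1, max_eq_left (hFt.trans hFab.le),
      max_eq_left hFt, sub_zero]
  have hFt : ¬ F t ≤ F a := not_le.mpr (hFs ha ht hat)
  rw [if_neg hFt, indicator_of_notMem (show t ∉ Iic a from not_le.mpr hat),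
    max_eq_right (not_le.mp hFt).le]
  rcases lt_or_ge t b with htb | hbt
  · rw [if_pos (hFs ht hb htb), indicator_of_mem (show t ∈ Ioo a b from ⟨hat, htb⟩)]
  · rw [if_neg (not_lt.mpr ((hFs.le_iff_le hb ht).mpr hbt)),
      indicator_of_notMem fun h => (not_lt.mpr hbt) h.2]

theorem setIntegral_maxMulMaxRightDeriv_div_nonpos (hfi : ∀ x, IntegrableOn f (Iic x))
    (hF : ∀ x, F x = ∫ t in Iic x, f t) (hFc : Continuous F) (hF0 : ∀ t, 0 ≤ F t)
    (hFs : StrictMonoOn F (Ici 0)) (hf0 : ∀ t, 0 ≤ t → 0 ≤ f t)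
    (hanti : AntitoneOn (fun t => (1 + t) * f t) (Ici 0))
    {a b c B : ℝ} (hc : 0 ≤ c) (ha : 0 ≤ a) (hab : a < b) (hbB : b ≤ B) (hfa : 0 < f a) :
    ∫ t in Ioc c B, maxMulMaxRightDeriv (F a) (F b) (F t) / (1 + t) ≤ 0 := by
  have ht0 : ∀ t ∈ Ioc c B, 0 ≤ t := fun t ht => by linarith [ht.1]
  rcases le_or_gt a c with hac | hca
  · refine setIntegral_nonpos measurableSet_Ioc fun t ht => div_nonpos_of_nonpos_of_nonneg ?_
      (by linarith [ht0 t ht])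
    rw [maxMulMaxRightDeriv_eq_indicator_sub_indicator hFs ha hab (ht0 t ht),
      indicator_of_notMem fun h => (not_lt.mpr (mem_Iic.mp h)) (hac.trans_lt ht.1), zero_sub,
      neg_nonpos]
    exact indicator_nonneg (fun t _ => hF0 t) t
  have hint : ∀ g : ℝ → ℝ, Continuous g → IntegrableOn (fun t => g t / (1 + t)) (Ioc c B) :=
    fun g hg => (integrableOn_Icc_div_one_add (by linarith) hg.continuousOn).mono_set
      Ioc_subset_Icc_self
  have hsplit : ∀ t ∈ Ioc c B, maxMulMaxRightDeriv (F a) (F b) (F t) / (1 + t) =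
      (Iic a).indicator (fun t => (F b - F a) / (1 + t)) t -
        (Ioo a b).indicator (fun t => F t / (1 + t)) t := fun t ht => by
    rw [maxMulMaxRightDeriv_eq_indicator_sub_indicator hFs ha hab (ht0 t ht), sub_div]
    congr 1 <;> simp only [indicator_apply] <;> split_ifs <;> simp
  rw [setIntegral_congr_fun measurableSet_Ioc hsplit,
    integral_sub ((hint _ continuous_const).indicator measurableSet_Iic)
      ((hint F hFc).indicator measurableSet_Ioo),
    setIntegral_indicator measurableSet_Iic, setIntegral_indicator measurableSet_Ioo,
    Ioc_inter_Iic, min_eq_right (hab.le.trans hbB),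
    inter_eq_right.mpr (show Ioo a b ⊆ Ioc c B from
      fun t ht => ⟨hca.trans ht.1, ht.2.le.trans hbB⟩), sub_nonpos]
  exact setIntegral_Ioc_sub_div_le hfi hF hFc hF0 hf0 hanti hc hca.le hab.le hfa

theorem integrable_maxMulMaxRightDeriv_div (hFc : Continuous F) (s r : ℝ) {c B q₁ q₂ : ℝ}
    (hc : -1 < c) : Integrable (Function.uncurry fun t q =>
      maxMulMaxRightDeriv (s + q) (r - q) (F t) / (1 + t))
      ((volume.restrict (Ioc c B)).prod (volume.restrict (Ioc q₁ q₂))) := by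
  rw [Measure.prod_restrict, ← Measure.volume_eq_prod]
  refine Integrable.mono' (g := fun p : ℝ × ℝ =>
      (|max (r - p.2) (F p.1)| + |max (s + p.2) (F p.1)|) / |1 + p.1|) ?_
    ((measurable_maxMulMaxRightDeriv.comp (f := fun p : ℝ × ℝ => (s + p.2, r - p.2, F p.1))
      (by fun_prop)).div (by fun_prop)).aestronglyMeasurable
    (.of_forall fun p => ?_)
  · refine ((ContinuousOn.div (by fun_prop) (by fun_prop) fun p hp => ?_).integrableOn_compact
      (isCompact_Icc.prod isCompact_Icc)).mono_set
        (prod_mono Ioc_subset_Icc_self Ioc_subset_Icc_self)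
    exact abs_ne_zero.mpr (by linarith [hp.1.1])
  · rw [Real.norm_eq_abs, Function.uncurry_apply_pair, abs_div]
    exact div_le_div_of_nonneg_right (abs_maxMulMaxRightDeriv_le _ _ _) (abs_nonneg _)

theorem setIntegral_Ioc_one_sub_max_mul_max_div_le (hfi : ∀ x, IntegrableOn f (Iic x))
    (hF : ∀ x, F x = ∫ t in Iic x, f t) (hFc : Continuous F) (hF0 : ∀ t, 0 ≤ F t)
    (hFs : StrictMonoOn F (Ici 0)) (hFsurj : ∀ p, 0 ≤ p → p < 1 → ∃ x, 0 ≤ x ∧ F x = p)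
    (hf : ∀ t, 0 ≤ t → 0 < f t) (hanti : AntitoneOn (fun t => (1 + t) * f t) (Ici 0))
    {s q₁ q₂ c B : ℝ} (hc : 0 ≤ c) (hB : 0 ≤ B) (hFB : 1 - q₁ ≤ F B) (hq₁ : 0 < q₁)
    (hsq₁ : 0 ≤ s + q₁) (hq₁₂ : q₁ ≤ q₂) (hq₂ : s + q₂ ≤ 1 - q₂) :
    ∫ t in Ioc c B, (1 - max (s + q₁) (F t) * max (1 - q₁) (F t)) / (1 + t) ≤
      ∫ t in Ioc c B, (1 - max (s + q₂) (F t) * max (1 - q₂) (F t)) / (1 + t) := by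
  have hint : ∀ q, IntegrableOn (fun t => (1 - max (s + q) (F t) * max (1 - q) (F t)) / (1 + t))
      (Ioc c B) := fun q =>
    (integrableOn_Icc_div_one_add (by linarith) (by fun_prop)).mono_set Ioc_subset_Icc_self
  have hdiff : ∀ t, (1 - max (s + q₂) (F t) * max (1 - q₂) (F t)) / (1 + t) -
      (1 - max (s + q₁) (F t) * max (1 - q₁) (F t)) / (1 + t) =
        -∫ q in Ioc q₁ q₂, maxMulMaxRightDeriv (s + q) (1 - q) (F t) / (1 + t) := fun t => by
    rw [integral_div, ← intervalIntegral.integral_of_le hq₁₂,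
      ← max_mul_max_sub_eq_integral s 1 (F t) hq₁₂]
    ring
  rw [← sub_nonneg, ← integral_sub (hint q₂) (hint q₁), integral_congr_ae (.of_forall hdiff),
    integral_neg, neg_nonneg, integral_integral_swap
      (integrable_maxMulMaxRightDeriv_div hFc s 1 (by linarith)), integral_Ioc_eq_integral_Ioo]
  -- for `q < q₂` the thresholds `F⁻¹ (s + q) < F⁻¹ (1 - q)` are distinct
  refine setIntegral_nonpos measurableSet_Ioo fun q hq => ?_
  obtain ⟨a, ha, hFa⟩ := hFsurj (s + q) (by linarith [hq.1]) (by linarith [hq.1, hq.2])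
  obtain ⟨b, hb, hFb⟩ := hFsurj (1 - q) (by linarith [hq.1, hq.2]) (by linarith [hq.1])
  rw [← hFa, ← hFb]
  exact setIntegral_maxMulMaxRightDeriv_div_nonpos hfi hF hFc hF0 hFs (fun t ht => (hf t ht).le)
    hanti hc ha ((hFs.lt_iff_lt ha hb).mp (by linarith [hq.1, hq.2]))
    ((hFs.le_iff_le hb hB).mp (by linarith [hq.1])) (hf a ha)

theorem setLIntegral_Ioi_one_sub_max_mul_max_div_le (hfi : ∀ x, IntegrableOn f (Iic x))
    (hF : ∀ x, F x = ∫ t in Iic x, f t) (hFc : Continuous F) (hF0 : ∀ t, 0 ≤ F t)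
    (hF1 : ∀ t, F t ≤ 1) (hFs : StrictMonoOn F (Ici 0))
    (hFsurj : ∀ p, 0 ≤ p → p < 1 → ∃ x, 0 ≤ x ∧ F x = p)
    (hf : ∀ t, 0 ≤ t → 0 < f t) (hanti : AntitoneOn (fun t => (1 + t) * f t) (Ici 0))
    {s q₁ q₂ c : ℝ} (hc : 0 ≤ c) (hq₁ : 0 < q₁) (hsq₁ : 0 ≤ s + q₁) (hq₁₂ : q₁ ≤ q₂)
    (hq₂ : s + q₂ ≤ 1 - q₂) :
    ∫⁻ t in Ioi c, ENNReal.ofReal ((1 - max (s + q₁) (F t) * max (1 - q₁) (F t)) / (1 + t)) ≤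
      ∫⁻ t in Ioi c, ENNReal.ofReal ((1 - max (s + q₂) (F t) * max (1 - q₂) (F t)) / (1 + t)) := by
  obtain ⟨b, hb, hFb⟩ := hFsurj (1 - q₁) (by linarith) (by linarith)
  have hB : 0 ≤ max c b := hc.trans (le_max_left c b)
  have hint : ∀ q, IntegrableOn (fun t => (1 - max (s + q) (F t) * max (1 - q) (F t)) / (1 + t))
      (Ioc c (max c b)) := fun q =>
    (integrableOn_Icc_div_one_add (by linarith) (by fun_prop)).mono_set Ioc_subset_Icc_self
  have hnonneg : ∀ q, 0 ≤ s + q → s + q ≤ 1 → 0 ≤ 1 - q → 1 - q ≤ 1 → ∀ t ∈ Ioc c (max c b),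
      0 ≤ (1 - max (s + q) (F t) * max (1 - q) (F t)) / (1 + t) := fun q h₀ h₁ h₂ h₃ t ht =>
    div_nonneg (sub_nonneg.mpr (mul_le_one₀ (max_le h₁ (hF1 t)) (h₂.trans (le_max_left _ _))
      (max_le h₃ (hF1 t)))) (by linarith [ht.1])
  refine setLIntegral_Ioi_ofReal_le_of_setIntegral_Ioc_le (le_max_left c b) (hint q₁) (hint q₂)
    (hnonneg q₁ hsq₁ (by linarith) (by linarith) (by linarith))
    (hnonneg q₂ (by linarith) (by linarith) (by linarith) (by linarith))
    (setIntegral_Ioc_one_sub_max_mul_max_div_le hfi hF hFc hF0 hFs hFsurj hf hanti hc hB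
      (hFb ▸ hFs.monotoneOn hb hB (le_max_right c b)) hq₁ hsq₁ hq₁₂ hq₂) fun t ht => ?_
  have hFt : 1 - q₁ ≤ F t :=
    hFb ▸ hFs.monotoneOn hb (hB.trans ht.out.le) ((le_max_right c b).trans ht.out.le)
  rw [max_eq_right (by linarith), max_eq_right hFt, max_eq_right (by linarith),
    max_eq_right (by linarith)]

end Density

noncomputable def truncated (τ x : ℝ) : ℝ := if τ ≤ x then x else 0

theorem measurable_truncated (τ : ℝ) : Measurable (truncated τ) :=
  Measurable.ite measurableSet_Ici measurable_id measurable_const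

theorem truncated_lt_iff {τ x t : ℝ} (ht : 0 < t) : truncated τ x < t ↔ x < max τ t := by
  unfold truncated
  split_ifs with h
  · exact ⟨fun hxt => lt_max_of_lt_right hxt, fun hx => (lt_max_iff.mp hx).resolve_left h.not_gt⟩
  · exact iff_of_true ht (lt_max_of_lt_left (not_le.mp h))

theorem truncated_le_max_zero (τ x : ℝ) : truncated τ x ≤ max x 0 := by
  unfold truncated
  split_ifs
  exacts [le_max_left _ _, le_max_right _ _]

theorem max_max_truncated_le (τ σ : ℝ) {x y c : ℝ} (hx : 0 ≤ x) (hc : 0 ≤ c) :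
    max (max (truncated τ x) (truncated σ y)) c ≤ c + max x y := by
  have hxy := le_max_left x y
  have hyx := le_max_right x y
  refine max_le (max_le ((truncated_le_max_zero τ x).trans (max_le ?_ ?_))
    ((truncated_le_max_zero σ y).trans (max_le ?_ ?_))) ?_ <;> linarith

theorem ofReal_log_one_add_sub_eq_setLIntegral {c x : ℝ} (hc : -1 < c) (hcx : c ≤ x) :
    ENNReal.ofReal (Real.log (1 + x) - Real.log (1 + c)) =
      ∫⁻ t in Ioc c x, ENNReal.ofReal (1 / (1 + t)) := by
  rw [← Real.log_div (by linarith) (by linarith), ← integral_one_div_of_pos (by linarith)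
    (by linarith), ← intervalIntegral.integral_comp_add_left, intervalIntegral.integral_of_le hcx,
    ofReal_integral_eq_lintegral_ofReal]
  · exact (integrableOn_Icc_div_one_add hc continuousOn_const).mono_set Ioc_subset_Icc_self
  · exact ae_restrict_of_forall_mem measurableSet_Ioc fun t ht =>
      div_nonneg zero_le_one (by linarith [ht.1])

section Probability

variable {Ω : Type*} [MeasurableSpace Ω] {μ : Measure Ω}

theorem lintegral_ofReal_log_one_add_sub [SFinite μ] {T : Ω → ℝ} (hT : Measurable T) {c : ℝ}
    (hc : -1 < c) (hcT : ∀ ω, c ≤ T ω) :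
    ∫⁻ ω, ENNReal.ofReal (Real.log (1 + T ω) - Real.log (1 + c)) ∂μ =
      ∫⁻ t in Ioi c, μ {ω | t ≤ T ω} * ENNReal.ofReal (1 / (1 + t)) := by
  have hslice : ∀ ω, ENNReal.ofReal (Real.log (1 + T ω) - Real.log (1 + c)) =
      ∫⁻ t in Ioi c, {p : Ω × ℝ | p.2 ≤ T p.1}.indicator
        (fun p => ENNReal.ofReal (1 / (1 + p.2))) (ω, t) := fun ω => by
    rw [ofReal_log_one_add_sub_eq_setLIntegral hc (hcT ω), ← Iic_inter_Ioi,
      ← Measure.restrict_restrict measurableSet_Iic, ← lintegral_indicator measurableSet_Iic]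
    rfl
  simp_rw [hslice]
  rw [lintegral_lintegral_swap (f := fun ω t => {p : Ω × ℝ | p.2 ≤ T p.1}.indicator
    (fun p => ENNReal.ofReal (1 / (1 + p.2))) (ω, t)) ((Measurable.indicator (by fun_prop)
      (measurableSet_le measurable_snd (hT.comp measurable_fst))).aemeasurable)]
  refine setLIntegral_congr_fun measurableSet_Ioi fun t _ => ?_
  rw [mul_comm, ← lintegral_indicator_const (measurableSet_le measurable_const hT)]
  rfl

theorem integral_log_one_add_le_of_lintegral_le [IsProbabilityMeasure μ] {T₁ T₂ : Ω → ℝ}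
    {c : ℝ} (hc : -1 < c) (hT₁ : Measurable T₁) (hT₂ : Measurable T₂) (hcT₁ : ∀ ω, c ≤ T₁ ω)
    (hcT₂ : ∀ ω, c ≤ T₂ ω) (hi₁ : Integrable (fun ω => Real.log (1 + T₁ ω)) μ)
    (hi₂ : Integrable (fun ω => Real.log (1 + T₂ ω)) μ)
    (hle : ∫⁻ t in Ioi c, μ {ω | t ≤ T₁ ω} * ENNReal.ofReal (1 / (1 + t)) ≤
      ∫⁻ t in Ioi c, μ {ω | t ≤ T₂ ω} * ENNReal.ofReal (1 / (1 + t))) :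
    ∫ ω, Real.log (1 + T₁ ω) ∂μ ≤ ∫ ω, Real.log (1 + T₂ ω) ∂μ := by
  have hexcess : ∀ T : Ω → ℝ, (∀ ω, c ≤ T ω) → Integrable (fun ω => Real.log (1 + T ω)) μ →
      ∫ ω, Real.log (1 + T ω) ∂μ - Real.log (1 + c) =
        (∫⁻ ω, ENNReal.ofReal (Real.log (1 + T ω) - Real.log (1 + c)) ∂μ).toReal := by
    intro T hcT hi
    rw [← integral_eq_lintegral_of_nonneg_ae (.of_forall fun ω => sub_nonneg.mpr <|
        Real.log_le_log (by linarith) (by linarith [hcT ω]))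
      (hi.sub (integrable_const _)).aestronglyMeasurable,
      integral_sub hi (integrable_const _), integral_const, probReal_univ, one_smul]
  rw [← sub_le_sub_iff_right (Real.log (1 + c)), hexcess T₁ hcT₁ hi₁, hexcess T₂ hcT₂ hi₂,
    lintegral_ofReal_log_one_add_sub hT₁ hc hcT₁, lintegral_ofReal_log_one_add_sub hT₂ hc hcT₂]
  refine ENNReal.toReal_mono ?_ hle
  rw [← lintegral_ofReal_log_one_add_sub hT₂ hc hcT₂]
  exact ((hi₂.sub (integrable_const _)).lintegral_lt_top).ne

theorem integrable_log_one_add_of_le [IsFiniteMeasure μ] {T M : Ω → ℝ} {c : ℝ}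
    (hT : Measurable T) (hc : 0 ≤ c) (hcT : ∀ ω, c ≤ T ω) (hM0 : ∀ ω, 0 ≤ M ω)
    (hTM : ∀ ω, T ω ≤ c + M ω) (hM : Integrable (fun ω => Real.log (1 + M ω)) μ) :
    Integrable (fun ω => Real.log (1 + T ω)) μ := by
  refine ((integrable_const (Real.log (1 + c))).add hM).mono'
    (Real.measurable_log.comp (measurable_const.add hT)).aestronglyMeasurable
    (.of_forall fun ω => ?_)
  rw [Real.norm_eq_abs, Pi.add_apply, abs_of_nonneg (Real.log_nonneg (by linarith [hcT ω])),
    ← Real.log_mul (by linarith) (by linarith [hM0 ω])]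
  exact Real.log_le_log (by linarith [hcT ω]) (by nlinarith [hM0 ω, hTM ω])

section Cdf

variable {X : Ω → ℝ} {F : ℝ → ℝ}

theorem nonneg_of_cdf (hF : ∀ x, F x = (μ {ω | X ω ≤ x}).toReal) (x : ℝ) : 0 ≤ F x :=
  hF x ▸ ENNReal.toReal_nonneg

theorem le_one_of_cdf [IsProbabilityMeasure μ] (hF : ∀ x, F x = (μ {ω | X ω ≤ x}).toReal)
    (x : ℝ) : F x ≤ 1 :=
  hF x ▸ measureReal_le_one

theorem monotone_of_cdf [IsFiniteMeasure μ] (hF : ∀ x, F x = (μ {ω | X ω ≤ x}).toReal) :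
    Monotone F := fun x y hxy => by
  rw [hF, hF]
  exact ENNReal.toReal_mono (measure_ne_top _ _) (measure_mono fun ω hω => le_trans hω hxy)

theorem measure_le_eq_ofReal_of_cdf [IsFiniteMeasure μ]
    (hF : ∀ x, F x = (μ {ω | X ω ≤ x}).toReal) (x : ℝ) :
    μ {ω | X ω ≤ x} = ENNReal.ofReal (F x) := by
  rw [hF, ENNReal.ofReal_toReal (measure_ne_top _ _)]

theorem measure_lt_eq_ofReal_of_cdf [IsFiniteMeasure μ]
    (hF : ∀ x, F x = (μ {ω | X ω ≤ x}).toReal) (hFc : Continuous F) (x : ℝ) :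
    μ {ω | X ω < x} = ENNReal.ofReal (F x) := by
  have hU : {ω | X ω < x} = ⋃ n : ℕ, {ω | X ω ≤ x - 1 / (n + 1)} := by
    ext ω
    simp only [mem_ofPred_eq, mem_iUnion]
    refine ⟨fun h => ?_, fun ⟨n, hn⟩ => hn.trans_lt (sub_lt_self x Nat.one_div_pos_of_nat)⟩
    obtain ⟨n, hn⟩ := exists_nat_one_div_lt (sub_pos.mpr h)
    exact ⟨n, by linarith⟩
  have hmono : Monotone fun n : ℕ => {ω | X ω ≤ x - 1 / ((n : ℝ) + 1)} :=
    fun m n hmn ω hω => le_trans hω (sub_le_sub_left (Nat.one_div_le_one_div hmn) x)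
  refine tendsto_nhds_unique (hU ▸ tendsto_measure_iUnion_atTop hmono) ?_
  simp only [Function.comp_def, measure_le_eq_ofReal_of_cdf hF]
  refine (ENNReal.continuous_ofReal.comp hFc).continuousAt.tendsto.comp ?_
  simpa using (tendsto_const_nhds (x := x)).sub tendsto_one_div_add_atTop_nhds_zero_nat

end Cdf

variable [IsProbabilityMeasure μ] {X Y : Ω → ℝ} {F : ℝ → ℝ}

theorem measure_le_max_truncated (hX : Measurable X) (hY : Measurable Y)
    (hXY : IndepFun X Y μ) (hFX : ∀ x, F x = (μ {ω | X ω ≤ x}).toReal)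
    (hFY : ∀ x, F x = (μ {ω | Y ω ≤ x}).toReal) (hFc : Continuous F) {a b c t : ℝ}
    (hc : 0 ≤ c) (hct : c < t) :
    μ {ω | t ≤ max (max (truncated a (X ω)) (truncated b (Y ω))) c} =
      ENNReal.ofReal (1 - max (F a) (F t) * max (F b) (F t)) := by
  have ht : 0 < t := hc.trans_lt hct
  have hF0 := nonneg_of_cdf hFX
  have hset : {ω | t ≤ max (max (truncated a (X ω)) (truncated b (Y ω))) c} =
      (X ⁻¹' Iio (max a t) ∩ Y ⁻¹' Iio (max b t))ᶜ := by
    ext ω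
    simp only [mem_ofPred_eq, ← not_lt, max_lt_iff, truncated_lt_iff ht, hct, and_true,
      mem_compl_iff, mem_inter_iff, mem_preimage, mem_Iio]
  rw [hset, measure_compl ((hX measurableSet_Iio).inter (hY measurableSet_Iio))
    (measure_ne_top _ _), measure_univ,
    hXY.measure_inter_preimage_eq_mul _ _ measurableSet_Iio measurableSet_Iio]
  change 1 - μ {ω | X ω < max a t} * μ {ω | Y ω < max b t} = _
  rw [measure_lt_eq_ofReal_of_cdf hFX hFc, measure_lt_eq_ofReal_of_cdf hFY hFc,
    (monotone_of_cdf hFX).map_max, (monotone_of_cdf hFX).map_max,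
    ← ENNReal.ofReal_mul (le_max_of_le_left (hF0 a)), ENNReal.ofReal_sub _
      (mul_nonneg (le_max_of_le_left (hF0 a)) (le_max_of_le_left (hF0 b))),
    ENNReal.ofReal_one]

theorem integral_log_one_add_max_truncated_le (hX : Measurable X) (hY : Measurable Y)
    (hXY : IndepFun X Y μ) (hX0 : ∀ ω, 0 ≤ X ω) (hFX : ∀ x, F x = (μ {ω | X ω ≤ x}).toReal)
    (hFY : ∀ x, F x = (μ {ω | Y ω ≤ x}).toReal) (hFc : Continuous F)
    (hlog : Integrable (fun ω => Real.log (1 + max (X ω) (Y ω))) μ) {a₁ b₁ a₂ b₂ c : ℝ}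
    (hc : 0 ≤ c)
    (hle : ∫⁻ t in Ioi c, ENNReal.ofReal ((1 - max (F a₁) (F t) * max (F b₁) (F t)) / (1 + t)) ≤
      ∫⁻ t in Ioi c, ENNReal.ofReal ((1 - max (F a₂) (F t) * max (F b₂) (F t)) / (1 + t))) :
    ∫ ω, Real.log (1 + max (max (truncated a₁ (X ω)) (truncated b₁ (Y ω))) c) ∂μ ≤
      ∫ ω, Real.log (1 + max (max (truncated a₂ (X ω)) (truncated b₂ (Y ω))) c) ∂μ := by
  have hT : ∀ a b, Measurable fun ω => max (max (truncated a (X ω)) (truncated b (Y ω))) c :=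
    fun a b => (((measurable_truncated a).comp hX).max ((measurable_truncated b).comp hY)).max
      measurable_const
  have hTi : ∀ a b, Integrable (fun ω =>
      Real.log (1 + max (max (truncated a (X ω)) (truncated b (Y ω))) c)) μ := fun a b =>
    integrable_log_one_add_of_le (hT a b) hc (fun _ => le_max_right _ _)
      (fun ω => (hX0 ω).trans (le_max_left _ _)) (fun ω => max_max_truncated_le _ _ (hX0 ω) hc)
      hlog
  have htail : ∀ a b, ∫⁻ t in Ioi c, μ {ω | t ≤ max (max (truncated a (X ω))
      (truncated b (Y ω))) c} * ENNReal.ofReal (1 / (1 + t)) =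
        ∫⁻ t in Ioi c, ENNReal.ofReal ((1 - max (F a) (F t) * max (F b) (F t)) / (1 + t)) :=
    fun a b => setLIntegral_congr_fun measurableSet_Ioi fun t ht => by
      rw [measure_le_max_truncated hX hY hXY hFX hFY hFc hc ht, ← ENNReal.ofReal_mul
        (sub_nonneg.mpr (mul_le_one₀ (max_le (le_one_of_cdf hFX a) (le_one_of_cdf hFX t))
          (le_max_of_le_right (nonneg_of_cdf hFX t))
          (max_le (le_one_of_cdf hFX b) (le_one_of_cdf hFX t)))), mul_one_div]
  exact integral_log_one_add_le_of_lintegral_le (by linarith) (hT _ _) (hT _ _)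
    (fun _ => le_max_right _ _) (fun _ => le_max_right _ _) (hTi _ _) (hTi _ _)
    ((htail _ _).trans_le (hle.trans_eq (htail _ _).symm))

end Probability

theorem rate_nondecreasing_in_q_general
    {Ω : Type*} [MeasurableSpace Ω] (μ : Measure Ω) [IsProbabilityMeasure μ]
    (X Y : Ω → ℝ) (hXm : Measurable X) (hYm : Measurable Y)
    (hX0 : ∀ ω, 0 ≤ X ω)
    (hindep : IndepFun X Y μ)
    (F f f' Finv : ℝ → ℝ)
    (hFX : ∀ x, F x = (μ {ω | X ω ≤ x}).toReal)
    (hFY : ∀ x, F x = (μ {ω | Y ω ≤ x}).toReal)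
    (hFcont : Continuous F)
    (hFdens : ∀ x, F x = ∫ t in Set.Iic x, f t)
    (hfpos : ∀ x, 0 ≤ x → 0 < f x) (hfneg : ∀ x, x < 0 → f x = 0)
    -- F is strictly increasing on [0,∞) with (right-)inverse Finv : [0,1) → [0,∞)
    (hFmono : StrictMonoOn F (Set.Ici 0))
    (hFinv : ∀ q, 0 ≤ q → q < 1 → F (Finv q) = q ∧ 0 ≤ Finv q)
    (hFinvF : ∀ x, 0 ≤ x → Finv (F x) = x)
    -- f is differentiable (on the support [0,∞)) with derivative f'
    (hf'deriv : ∀ x, 0 ≤ x → HasDerivWithinAt f (f' x) (Set.Ici 0) x)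
    (hcond : ∀ x, 0 ≤ x → x < 1 → f' (Finv x) ≤ - f (Finv x) / (1 + Finv x))
    (hInt : Integrable (fun ω => Real.log (1 + max (X ω) (Y ω))) μ)
    (lam : ℝ)
    (c : ℝ) (hc : 0 ≤ c)
    (q₁ q₂ : ℝ) (hq₁ : max 0 (lam - 1) < q₁) (hq₁₂ : q₁ ≤ q₂) (hq₂ : q₂ ≤ lam / 2) :
    ∫ ω, Real.log (1 + max (max (if Finv (1 - (lam - q₁)) ≤ X ω then X ω else 0)
        (if Finv (1 - q₁) ≤ Y ω then Y ω else 0)) c) ∂μ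
      ≤ ∫ ω, Real.log (1 + max (max (if Finv (1 - (lam - q₂)) ≤ X ω then X ω else 0)
        (if Finv (1 - q₂) ≤ Y ω then Y ω else 0)) c) ∂μ := by
  have hq₁0 : 0 < q₁ := (le_max_left _ _).trans_lt hq₁
  have hlq₁ : lam - 1 < q₁ := (le_max_right _ _).trans_lt hq₁
  have hF0 := nonneg_of_cdf hFX
  have hF1 := le_one_of_cdf hFX
  have hanti := antitoneOn_one_add_mul_of_hasDerivWithinAt hf'deriv fun x hx => by
    have hFx : F x < 1 := (hFmono (mem_Ici.mpr hx.le) (mem_Ici.mpr (by linarith))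
      (lt_add_one x)).trans_le (hF1 _)
    simpa only [hFinvF x hx.le] using hcond (F x) (hF0 x) hFx
  have hthresholds : ∀ q, 0 < q → lam - 1 < q → q ≤ lam / 2 →
      F (Finv (1 - (lam - q))) = 1 - lam + q ∧ F (Finv (1 - q)) = 1 - q := fun q h₀ h₁ h₂ =>
    ⟨((hFinv _ (by linarith) (by linarith)).1).trans (by ring),
      (hFinv _ (by linarith) (by linarith)).1⟩
  obtain ⟨ha₁, hb₁⟩ := hthresholds q₁ hq₁0 hlq₁ (by linarith)
  obtain ⟨ha₂, hb₂⟩ := hthresholds q₂ (by linarith) (by linarith) hq₂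
  refine integral_log_one_add_max_truncated_le hXm hYm hindep hX0 hFX hFY hFcont hInt hc ?_
  rw [ha₁, hb₁, ha₂, hb₂]
  exact setLIntegral_Ioi_one_sub_max_mul_max_div_le
    (integrableOn_Iic_of_continuousOn_Ici (fun x hx => (hf'deriv x hx).continuousWithinAt) hfneg)
    hFdens hFcont hF0 hF1 hFmono (fun p h₀ h₁ => ⟨Finv p, (hFinv p h₀ h₁).2, (hFinv p h₀ h₁).1⟩)
    hfpos hanti hc hq₁0 (by linarith) hq₁₂ (by linarith)

theorem rate_nondecreasing_in_q
    {Ω : Type*} [MeasurableSpace Ω] (μ : Measure Ω) [IsProbabilityMeasure μ]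
    (X Y : Ω → ℝ) (hXm : Measurable X) (hYm : Measurable Y)
    (hX0 : ∀ ω, 0 ≤ X ω) (hY0 : ∀ ω, 0 ≤ Y ω)
    (hindep : IndepFun X Y μ)
    (F f f' Finv : ℝ → ℝ)
    (hFX : ∀ x, F x = (μ {ω | X ω ≤ x}).toReal)
    (hFY : ∀ x, F x = (μ {ω | Y ω ≤ x}).toReal)
    (hFcont : Continuous F) (hF0 : F 0 = 0)
    (hFdens : ∀ x, F x = ∫ t in Set.Iic x, f t)
    (hfpos : ∀ x, 0 ≤ x → 0 < f x) (hfneg : ∀ x, x < 0 → f x = 0)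
    -- F is strictly increasing on [0,∞) with (right-)inverse Finv : [0,1) → [0,∞)
    (hFmono : StrictMonoOn F (Set.Ici 0))
    (hFinv : ∀ q, 0 ≤ q → q < 1 → F (Finv q) = q ∧ 0 ≤ Finv q)
    (hFinvF : ∀ x, 0 ≤ x → Finv (F x) = x)
    -- f is bounded in a neighborhood of 0
    (hfbdd : ∃ ε > (0 : ℝ), ∃ C : ℝ, ∀ x, |x| ≤ ε → f x ≤ C)
    -- f is differentiable (on the support [0,∞)) with derivative f'
    (hf'deriv : ∀ x, 0 ≤ x → HasDerivWithinAt f (f' x) (Set.Ici 0) x)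
    (hcond : ∀ x, 0 ≤ x → x < 1 → f' (Finv x) ≤ - f (Finv x) / (1 + Finv x))
    (hInt : Integrable (fun ω => Real.log (1 + max (X ω) (Y ω))) μ)
    (lam : ℝ) (hlam0 : 0 < lam) (hlam2 : lam ≤ 2)
    (c : ℝ) (hc : 0 ≤ c)
    (q₁ q₂ : ℝ) (hq₁ : max 0 (lam - 1) < q₁) (hq₁₂ : q₁ ≤ q₂) (hq₂ : q₂ ≤ lam / 2) :
    ∫ ω, Real.log (1 + max (max (if Finv (1 - (lam - q₁)) ≤ X ω then X ω else 0)
        (if Finv (1 - q₁) ≤ Y ω then Y ω else 0)) c) ∂μ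
      ≤ ∫ ω, Real.log (1 + max (max (if Finv (1 - (lam - q₂)) ≤ X ω then X ω else 0)
        (if Finv (1 - q₂) ≤ Y ω then Y ω else 0)) c) ∂μ :=
  rate_nondecreasing_in_q_general μ X Y hXm hYm hX0 hindep F f f' Finv hFX hFY hFcont hFdens hfpos
    hfneg hFmono hFinv hFinvF hf'deriv hcond hInt lam c hc q₁ q₂ hq₁ hq₁₂ hq₂
end

section
/- Let M ≥ 2 be an integer and ρ > 0, and define f(x) = e^{−x/ρ}·(1+x)^{−M}·[ (1+x)/ρ + M − 1 ] for x ≥ 0 (the density of the SINR on a beam in a Rayleigh-fading system with M random orthonormal beams and noise power 1/ρ). Then f′(x) ≤ −f(x)/(1+x) for all x ≥ 0. -/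
/-!
Along `f = u · g` with `u(x) = e^{-x/ρ} (1+x)^{-M}` and `g(x) = (1+x)/ρ + M - 1`, one has
`u' = -u (1/ρ + M/(1+x))` and `g' = 1/ρ`, so
`f' + f/(1+x) = u · ((1 - g)/ρ - (M - 1) g/(1+x))`.
Both terms are nonpositive because `M ≥ 2` forces `g ≥ 1`.
-/

open Real

namespace SINR

noncomputable def density (M : ℕ) (ρ x : ℝ) : ℝ :=
  exp (-x / ρ) / (1 + x) ^ M * ((1 + x) / ρ + M - 1)

theorem hasDerivAt_exp_neg_div_div_pow (M : ℕ) (ρ : ℝ) {x : ℝ} (hx : 1 + x ≠ 0) :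
    HasDerivAt (fun y => exp (-y / ρ) / (1 + y) ^ M)
      (exp (-x / ρ) / (1 + x) ^ M * (-1 / ρ - M / (1 + x))) x := by
  have hexp : HasDerivAt (fun y => exp (-y / ρ)) (exp (-x / ρ) * (-1 / ρ)) x :=
    ((hasDerivAt_id x).neg.div_const ρ).exp
  have hpow : HasDerivAt (fun y => (1 + y) ^ M) (M * (1 + x) ^ (M - 1)) x :=
    (hasDerivAt_pow M (1 + x)).comp_const_add 1 x
  refine (hexp.fun_div hpow (pow_ne_zero M hx)).congr_deriv ?_
  rcases M with _ | M
  · simp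
  · rw [Nat.add_sub_cancel]
    field_simp
    ring

theorem hasDerivAt_density (M : ℕ) (ρ : ℝ) {x : ℝ} (hx : 1 + x ≠ 0) :
    HasDerivAt (density M ρ)
      (exp (-x / ρ) / (1 + x) ^ M *
        (1 / ρ - ((1 + x) / ρ + M - 1) * (1 / ρ + M / (1 + x)))) x := by
  have hg : HasDerivAt (fun y : ℝ => (1 + y) / ρ + M - 1) (1 / ρ) x := by
    simpa using ((((hasDerivAt_id x).const_add 1).div_const ρ).add_const (M : ℝ)).sub_const 1
  exact ((hasDerivAt_exp_neg_div_div_pow M ρ hx).mul hg).congr_deriv (by ring)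

theorem one_div_sub_mul_le_neg_div {ρ t g m : ℝ} (hρ : 0 < ρ) (ht : 0 < t) (hg : 1 ≤ g)
    (hm : 1 ≤ m) : 1 / ρ - g * (1 / ρ + m / t) ≤ -(g / t) := by
  have hsplit : 1 / ρ - g * (1 / ρ + m / t) + g / t = (1 - g) / ρ - (m - 1) * g / t := by ring
  have h₁ : (1 - g) / ρ ≤ 0 := div_nonpos_of_nonpos_of_nonneg (by linarith) hρ.le
  have h₂ : 0 ≤ (m - 1) * g / t := by positivity
  linarith

end SINR

theorem multibeam_density_condition (M : ℕ) (hM : 2 ≤ M) (ρ : ℝ) (hρ : 0 < ρ) :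
    ∀ x : ℝ, 0 ≤ x →
      deriv (fun y : ℝ =>
          Real.exp (-y / ρ) / (1 + y) ^ M * ((1 + y) / ρ + M - 1)) x
        ≤ - (Real.exp (-x / ρ) / (1 + x) ^ M * ((1 + x) / ρ + M - 1)) / (1 + x) := by
  intro x hx
  have h1x : 0 < 1 + x := by linarith
  have hM' : (2 : ℝ) ≤ M := by exact_mod_cast hM
  have hg : 1 ≤ (1 + x) / ρ + M - 1 := by
    have : 0 ≤ (1 + x) / ρ := by positivity
    linarith
  change deriv (SINR.density M ρ) x ≤ _
  rw [(SINR.hasDerivAt_density M ρ h1x.ne').deriv]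
  refine (mul_le_mul_of_nonneg_left (SINR.one_div_sub_mul_le_neg_div hρ h1x hg (by linarith))
    (by positivity)).trans_eq (by ring)
end

section
/- Let M ≥ 1 be an integer and ρ > 0. Let Z, W₁, …, W_{M−1} be independent random variables, each exponentially distributed with rate 1, and define the SINR γ = Z / ( 1/ρ + Σ_{k=1}^{M−1} W_k ). Then for every x ≥ 0, P(γ > x) = e^{−x/ρ} / (1+x)^{M−1}; that is, γ has cumulative distribution function F(x) = 1 − e^{−x/ρ}/(1+x)^{M−1} on [0,∞). -/
/-!
Conditionally on the interference-plus-noise `S = 1/ρ + Σ W_k`, which is independent of `Z`,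
the event `γ > x` is `Z > x S` and has probability `e^{-x S}`. Hence `P(γ > x) = E[e^{-x S}]`,
and by independence of the `W_k` this factors as `e^{-x/ρ} ∏_k E[e^{-x W_k}]`, where each
factor is the Laplace transform `1/(1+x)` of the rate-one exponential law.
-/

open MeasureTheory ProbabilityTheory Real Set

namespace ProbabilityTheory

variable {Ω ι : Type*} [MeasurableSpace Ω] {μ : Measure Ω} {X Y Z : Ω → ℝ}
  {W : ι → Ω → ℝ} {r : ℝ}

lemma expMeasure_Ioi (hr : 0 < r) {t : ℝ} (ht : 0 ≤ t) :
    expMeasure r (Ioi t) = ENNReal.ofReal (exp (-(r * t))) := by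
  have := isProbabilityMeasure_expMeasure hr
  have hcdf := cdf_expMeasure_eq hr t
  rw [cdf_eq_real, if_pos ht] at hcdf
  rw [← ofReal_measureReal, ← compl_Iic, probReal_compl_eq_one_sub measurableSet_Iic, hcdf,
    sub_sub_cancel]

lemma mgf_id_expMeasure (hr : 0 < r) {t : ℝ} (ht : t < r) :
    mgf id (expMeasure r) t = r / (r - t) := by
  have hrt : 0 < r - t := sub_pos.mpr ht
  have hdensity : ∀ z, exponentialPDF r z * ENNReal.ofReal (exp (t * z))
      = ENNReal.ofReal (r / (r - t)) * exponentialPDF (r - t) z := by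
    intro z
    rcases lt_or_ge z 0 with hz | hz
    · simp [exponentialPDF_of_neg hz]
    · rw [exponentialPDF_of_nonneg hz, exponentialPDF_of_nonneg hz,
        ← ENNReal.ofReal_mul (by positivity), ← ENNReal.ofReal_mul (by positivity),
        mul_assoc, ← exp_add, ← mul_assoc, div_mul_cancel₀ _ hrt.ne']
      ring_nf
  have hmeas (s : ℝ) : Measurable (exponentialPDF s) :=
    (measurable_exponentialPDFReal s).ennreal_ofReal
  rw [mgf, integral_eq_lintegral_of_nonneg_ae (ae_of_all _ fun _ => (exp_pos _).le)
    (by fun_prop), show expMeasure r = volume.withDensity (exponentialPDF r) from rfl,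
    lintegral_withDensity_eq_lintegral_mul _ (hmeas r) (by fun_prop)]
  simp only [Pi.mul_apply, id, hdensity]
  rw [lintegral_const_mul _ (hmeas _),
    lintegral_exponentialPDF_eq_one hrt, mul_one, ENNReal.toReal_ofReal (by positivity)]

lemma map_eq_expMeasure_one_of_cdf [IsProbabilityMeasure μ] (hX : Measurable X)
    (hcdf : ∀ t : ℝ, (μ {ω | X ω ≤ t}).toReal = if 0 ≤ t then 1 - exp (-t) else 0) :
    μ.map X = expMeasure 1 := by
  have := isProbabilityMeasure_expMeasure one_pos
  have := Measure.isProbabilityMeasure_map (μ := μ) hX.aemeasurable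
  refine Measure.eq_of_cdf _ _ (StieltjesFunction.ext fun t => ?_)
  rw [cdf_eq_real, cdf_expMeasure_eq one_pos, one_mul, map_measureReal_apply hX measurableSet_Iic]
  exact hcdf t

lemma ae_nonneg_of_map_eq_expMeasure (hX : Measurable X) (hlaw : μ.map X = expMeasure r) :
    ∀ᵐ ω ∂μ, 0 ≤ X ω := by
  have hIio : expMeasure r (Iio 0) = 0 := by
    rw [show expMeasure r = volume.withDensity (exponentialPDF r) from rfl,
      withDensity_apply _ measurableSet_Iio]
    exact lintegral_exponentialPDF_of_nonpos le_rfl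
  rw [← hlaw, Measure.map_apply hX measurableSet_Iio] at hIio
  filter_upwards [measure_eq_zero_iff_ae_notMem.mp hIio] with ω hω
  simpa using hω

lemma mgf_neg_of_map_eq_expMeasure (hX : Measurable X) (hlaw : μ.map X = expMeasure r)
    (hr : 0 < r) {x : ℝ} (hx : 0 ≤ x) : mgf X μ (-x) = r / (r + x) := by
  rw [← mgf_id_map hX.aemeasurable, hlaw, mgf_id_expMeasure hr (by linarith), sub_neg_eq_add]

-- Conditioning on `Y`: `P(Y < X | Y = y) = P(X > y) = e^{-ry}`.
lemma measure_lt_of_indepFun_expMeasure [IsProbabilityMeasure μ] (hX : Measurable X)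
    (hY : Measurable Y) (hindep : IndepFun Y X μ) (hr : 0 < r) (hlaw : μ.map X = expMeasure r)
    (hYnonneg : ∀ᵐ ω ∂μ, 0 ≤ Y ω) :
    (μ {ω | Y ω < X ω}).toReal = mgf Y μ (-r) := by
  have hlt : MeasurableSet {p : ℝ × ℝ | p.1 < p.2} :=
    measurableSet_lt measurable_fst measurable_snd
  have hjoint : μ {ω | Y ω < X ω} = ∫⁻ y, expMeasure r (Ioi y) ∂(μ.map Y) :=
    calc μ {ω | Y ω < X ω} = μ.map (fun ω => (Y ω, X ω)) {p | p.1 < p.2} :=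
          (Measure.map_apply (hY.prodMk hX) hlt).symm
      _ = ((μ.map Y).prod (μ.map X)) {p | p.1 < p.2} := by
          rw [(indepFun_iff_map_prod_eq_prod_map_map hY.aemeasurable hX.aemeasurable).mp hindep]
      _ = ∫⁻ y, expMeasure r (Ioi y) ∂(μ.map Y) := by rw [Measure.prod_apply hlt, hlaw]; rfl
  have htail : ∫⁻ y, expMeasure r (Ioi y) ∂(μ.map Y)
      = ∫⁻ ω, ENNReal.ofReal (exp (-r * Y ω)) ∂μ := by
    rw [← lintegral_map (f := fun y => ENNReal.ofReal (exp (-r * y))) (by fun_prop) hY]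
    refine lintegral_congr_ae ?_
    filter_upwards [(ae_map_iff hY.aemeasurable measurableSet_Ici).mpr hYnonneg] with y hy
    rw [expMeasure_Ioi hr hy, neg_mul]
  rw [hjoint, htail, mgf, integral_eq_lintegral_of_nonneg_ae
    (ae_of_all _ fun _ => (exp_pos _).le) (by fun_prop)]

lemma iIndepFun.of_optionElim (h : iIndepFun (fun o : Option ι => o.elim Z W) μ) :
    iIndepFun W μ :=
  h.precomp (g := some) (Option.some_injective ι)

lemma iIndepFun.indepFun_sum_of_optionElim [Fintype ι]
    (h : iIndepFun (fun o : Option ι => o.elim Z W) μ) (hZ : Measurable Z)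
    (hW : ∀ k, Measurable (W k)) : IndepFun (∑ k, W k) Z μ := by
  have hmeas : ∀ o : Option ι, Measurable (o.elim Z W) := by rintro (_ | k); exacts [hZ, hW k]
  simpa [Finset.sum_map] using
    h.indepFun_finsetSum_of_notMem hmeas (s := Finset.univ.map .some) (i := none) (by simp)

end ProbabilityTheory

theorem sinr_distribution_rayleigh_general
    {Ω : Type*} [MeasurableSpace Ω] (μ : Measure Ω) [IsProbabilityMeasure μ]
    (M : ℕ) (ρ : ℝ) (hρ : 0 < ρ)
    (Z : Ω → ℝ) (W : Fin (M - 1) → Ω → ℝ)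
    (hZm : Measurable Z) (hWm : ∀ k, Measurable (W k))
    (hindep : iIndepFun
      (fun o : Option (Fin (M - 1)) => o.elim Z fun k => W k) μ)
    (hZ : ∀ t : ℝ, (μ {ω | Z ω ≤ t}).toReal = if 0 ≤ t then 1 - Real.exp (-t) else 0)
    (hW : ∀ k, ∀ t : ℝ,
      (μ {ω | W k ω ≤ t}).toReal = if 0 ≤ t then 1 - Real.exp (-t) else 0) :
    ∀ x : ℝ, 0 ≤ x →
      (μ {ω | x < Z ω / (1 / ρ + ∑ k, W k ω)}).toReal
          = Real.exp (-x / ρ) / (1 + x) ^ (M - 1)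
      ∧ (μ {ω | Z ω / (1 / ρ + ∑ k, W k ω) ≤ x}).toReal
          = 1 - Real.exp (-x / ρ) / (1 + x) ^ (M - 1) := by
  intro x hx
  have hZlaw := map_eq_expMeasure_one_of_cdf hZm hZ
  have hWlaw k := map_eq_expMeasure_one_of_cdf (hWm k) (hW k)
  set S : Ω → ℝ := fun ω => 1 / ρ + ∑ k, W k ω
  have hS : S = fun ω => 1 / ρ + (∑ k, W k) ω := by simp only [S, Finset.sum_apply]
  have hSm : Measurable S := by fun_prop
  have hSpos : ∀ᵐ ω ∂μ, 0 < S ω := by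
    filter_upwards [ae_all_iff.mpr fun k => ae_nonneg_of_map_eq_expMeasure (hWm k) (hWlaw k)]
      with ω hω
    have hsum : 0 ≤ ∑ k, W k ω := Finset.sum_nonneg fun k _ => hω k
    positivity
  have hSZ : IndepFun S Z μ := by
    rw [hS]
    exact (hindep.indepFun_sum_of_optionElim hZm hWm).comp (measurable_const_add _) measurable_id
  have hxSZ : IndepFun (fun ω => x * S ω) Z μ := hSZ.comp (measurable_const_mul x) measurable_id
  have hsets : {ω | x < Z ω / S ω} =ᵐ[μ] {ω | x * S ω < Z ω} := by
    filter_upwards [hSpos] with ω hω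
    exact propext (lt_div_iff₀ hω)
  have htail : (μ {ω | x < Z ω / S ω}).toReal = exp (-x / ρ) / (1 + x) ^ (M - 1) := by
    rw [measure_congr hsets, measure_lt_of_indepFun_expMeasure hZm (hSm.const_mul x) hxSZ one_pos
      hZlaw (hSpos.mono fun ω h => by positivity), mgf_const_mul, hS, mgf_const_add,
      hindep.of_optionElim.mgf_sum hWm]
    simp only [mul_neg_one, mgf_neg_of_map_eq_expMeasure (hWm _) (hWlaw _) one_pos hx]
    rw [Finset.prod_const, Finset.card_univ, Fintype.card_fin, one_div_pow, ← div_eq_mul_one_div]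
    ring_nf
  refine ⟨htail, ?_⟩
  have hcompl : {ω | Z ω / S ω ≤ x} = {ω | x < Z ω / S ω}ᶜ := by ext; simp
  have hmeas : MeasurableSet {ω | x < Z ω / S ω} :=
    measurableSet_lt measurable_const (hZm.div hSm)
  rw [hcompl, ← measureReal_def, probReal_compl_eq_one_sub hmeas, measureReal_def, htail]

theorem sinr_distribution_rayleigh
    {Ω : Type*} [MeasurableSpace Ω] (μ : Measure Ω) [IsProbabilityMeasure μ]
    (M : ℕ) (hM : 1 ≤ M) (ρ : ℝ) (hρ : 0 < ρ)
    (Z : Ω → ℝ) (W : Fin (M - 1) → Ω → ℝ)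
    (hZm : Measurable Z) (hWm : ∀ k, Measurable (W k))
    (hindep : iIndepFun
      (fun o : Option (Fin (M - 1)) => o.elim Z fun k => W k) μ)
    (hZ : ∀ t : ℝ, (μ {ω | Z ω ≤ t}).toReal = if 0 ≤ t then 1 - Real.exp (-t) else 0)
    (hW : ∀ k, ∀ t : ℝ,
      (μ {ω | W k ω ≤ t}).toReal = if 0 ≤ t then 1 - Real.exp (-t) else 0) :
    ∀ x : ℝ, 0 ≤ x →
      (μ {ω | x < Z ω / (1 / ρ + ∑ k, W k ω)}).toReal
          = Real.exp (-x / ρ) / (1 + x) ^ (M - 1)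
      ∧ (μ {ω | Z ω / (1 / ρ + ∑ k, W k ω) ≤ x}).toReal
          = 1 - Real.exp (-x / ρ) / (1 + x) ^ (M - 1) :=
  sinr_distribution_rayleigh_general μ M ρ hρ Z W hZm hWm hindep hZ hW
end
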